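/- arXiv:2006.04167 — 5 statements merged into one kernel-verified Lean document; each statement's English description precedes it below -/
import Mathlib

section
/- Let q be a 0-CQ. Then for every ABox A, cov_A, A ⊨ q if and only if there is a homomorphism from q into A viewed as an interpretation; moreover, for every twinless ABox A, cov_A^⊥, A ⊨ q if and only if there is a homomorphism from q into A viewed as an interpretation. -/
attribute [local instance] Classical.propDecidable

namespace DS

/-- Ground/query atoms over binary-predicate alphabet `σ` and node type `α`:
unary predicates `F`, `T`, `A` and binary predicates `R r`. -/
inductive At (σ α : Type) : Type
  | F : α → At σ α
  | T : α → At σ α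
  | A : α → At σ α
  | R : σ → α → α → At σ α

namespace At

/-- Renaming of the nodes of an atom. -/
def map {σ α β : Type} (h : α → β) : At σ α → At σ β
  | .F a => .F (h a)
  | .T a => .T (h a)
  | .A a => .A (h a)
  | .R r a b => .R r (h a) (h b)

/-- The nodes occurring in an atom. -/
def vars {σ α : Type} : At σ α → Set α
  | .F a => {a}
  | .T a => {a}
  | .A a => {a}
  | .R _ a b => {a, b}

end At

/-- An interpretation over domain `δ`. -/
structure Interp (σ δ : Type) where
  FS : δ → Prop
  TS : δ → Prop
  AS : δ → Prop
  RS : σ → δ → δ → Prop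

/-- Truth of an atom in an interpretation. -/
def Interp.satAt {σ δ : Type} (I : Interp σ δ) : At σ δ → Prop
  | .F a => I.FS a
  | .T a => I.TS a
  | .A a => I.AS a
  | .R r a b => I.RS r a b

/-- `I ⊨ q`: there is a homomorphism from the Boolean CQ `q` into `I`. -/
def Interp.satCQ {σ δ V : Type} (I : Interp σ δ) (q : Set (At σ V)) : Prop :=
  ∃ h : V → δ, ∀ a ∈ q, I.satAt (At.map h a)

/-- An ABox viewed as an interpretation over its own individuals. -/
def toInterp {σ α : Type} (A : Set (At σ α)) : Interp σ α where
  FS a := At.F a ∈ A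
  TS a := At.T a ∈ A
  AS a := At.A a ∈ A
  RS r a b := At.R r a b ∈ A

/-- An individual is undecided if it is labelled `A` but neither `F` nor `T`. -/
def undecided {σ α : Type} (A : Set (At σ α)) (a : α) : Prop :=
  At.A a ∈ A ∧ At.F a ∉ A ∧ At.T a ∉ A

/-- The minimal model of `cov_A` and the ABox `A` determined by a choice `c` of
one of `F`/`T` for each undecided `A`-individual. -/
def minModel {σ α : Type} (A : Set (At σ α)) (c : α → Bool) : Interp σ α where
  FS a := At.F a ∈ A ∨ (undecided A a ∧ c a = true)
  TS a := At.T a ∈ A ∨ (undecided A a ∧ c a = false)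
  AS a := At.A a ∈ A
  RS r a b := At.R r a b ∈ A

/-- `F` and `T` are interpreted disjointly. -/
def disjointFT {σ δ : Type} (I : Interp σ δ) : Prop := ∀ d : δ, ¬ (I.FS d ∧ I.TS d)

/-- Certain answer to the OMQ `(cov_A, q)` over the ABox `A`:
`q` holds in every minimal model of `cov_A` and `A`. -/
def covACert {σ α V : Type} (A : Set (At σ α)) (q : Set (At σ V)) : Prop :=
  ∀ c : α → Bool, (minModel A c).satCQ q

/-- Certain answer to the OMQ `(cov_A^⊥, q)` over the ABox `A`:
`q` holds in every minimal model of `cov_A^⊥` and `A` (the minimal models of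
`cov_A` in which `F` and `T` are disjoint). -/
def covABotCert {σ α V : Type} (A : Set (At σ α)) (q : Set (At σ V)) : Prop :=
  ∀ c : α → Bool, disjointFT (minModel A c) → (minModel A c).satCQ q

/-- No `FT`-twin occurs. -/
def twinFree {σ α : Type} (A : Set (At σ α)) : Prop :=
  ∀ a : α, ¬ (At.F a ∈ A ∧ At.T a ∈ A)

/-- A CQ does not use the unary predicate `A`. -/
def noA {σ V : Type} (q : Set (At σ V)) : Prop := ∀ v : V, At.A v ∉ q

/-- `x` occurs in `q`. -/
def occ {σ V : Type} (q : Set (At σ V)) (x : V) : Prop := ∃ a ∈ q, x ∈ At.vars a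

/-- Connectedness of a CQ. -/
def connCQ {σ V : Type} (q : Set (At σ V)) : Prop :=
  ∀ x y : V, occ q x → occ q y →
    Relation.ReflTransGen (fun u v => ∃ a ∈ q, u ∈ At.vars a ∧ v ∈ At.vars a) x y

/-- Solitary `F`-node of a CQ. -/
def solF {σ V : Type} (q : Set (At σ V)) (x : V) : Prop := At.F x ∈ q ∧ At.T x ∉ q

/-- Solitary `T`-node of a CQ. -/
def solT {σ V : Type} (q : Set (At σ V)) (y : V) : Prop := At.T y ∈ q ∧ At.F y ∉ q

/-- A `0`-CQ: a CQ with no solitary `F`-node or no solitary `T`-node. -/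
def isZeroCQ {σ V : Type} (q : Set (At σ V)) : Prop :=
  (∀ x, ¬ solF q x) ∨ (∀ x, ¬ solT q x)

/-
Every minimal model contains the ABox, so a match into the ABox is a match into
every minimal model. Conversely, if `q` has no solitary `F`, take the minimal model
that puts every undecided individual into `F`: a match of `q` there sends every
`F`-variable (being a twin) to an individual carrying `T` in the ABox itself, hence
not undecided, so its `F` also comes from the ABox; thus the match is already a match
into the ABox. The case of no solitary `T` is symmetric. Both extreme models are
disjoint on twinless ABoxes, so the same argument works for `cov_A^⊥`.
-/

section MinModel

variable {σ α V : Type} (A : Set (At σ α))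

lemma minModel_satAt_of_toInterp_satAt (c : α → Bool) {a : At σ α}
    (ha : (toInterp A).satAt a) : (minModel A c).satAt a := by
  cases a with
  | F x => exact Or.inl ha
  | T x => exact Or.inl ha
  | A x => exact ha
  | R r x y => exact ha

lemma minModel_satCQ_of_toInterp_satCQ (c : α → Bool) {q : Set (At σ V)}
    (hq : (toInterp A).satCQ q) : (minModel A c).satCQ q :=
  let ⟨h, hh⟩ := hq
  ⟨h, fun a ha => minModel_satAt_of_toInterp_satAt A c (hh a ha)⟩

lemma minModel_true_TS (a : α) : (minModel A fun _ => true).TS a ↔ At.T a ∈ A := by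
  simp [minModel]

lemma minModel_false_FS (a : α) : (minModel A fun _ => false).FS a ↔ At.F a ∈ A := by
  simp [minModel]

lemma disjointFT_minModel_const (hA : twinFree A) (b : Bool) :
    disjointFT (minModel A fun _ => b) := by
  rintro d ⟨hF | ⟨huF, hbF⟩, hT | ⟨huT, hbT⟩⟩
  · exact hA d ⟨hF, hT⟩
  · exact huT.2.1 hF
  · exact huF.2.2 hT
  · exact Bool.noConfusion (hbF.symm.trans hbT)

variable {q : Set (At σ V)}

lemma toInterp_satCQ_of_minModel_true (hqA : noA q) (hF : ∀ x, ¬ solF q x)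
    (hq : (minModel A fun _ => true).satCQ q) : (toInterp A).satCQ q := by
  obtain ⟨h, hh⟩ := hq
  refine ⟨h, fun a ha => ?_⟩
  have hs := hh a ha
  cases a with
  | F x =>
    have hTq : At.T x ∈ q := by_contra fun hT => hF x ⟨ha, hT⟩
    have hTA : At.T (h x) ∈ A := (minModel_true_TS A _).1 (hh _ hTq)
    rcases hs with hFA | ⟨hu, -⟩
    · exact hFA
    · exact absurd hTA hu.2.2
  | T x => exact (minModel_true_TS A _).1 hs
  | A x => exact absurd ha (hqA x)
  | R r x y => exact hs

lemma toInterp_satCQ_of_minModel_false (hqA : noA q) (hT : ∀ x, ¬ solT q x)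
    (hq : (minModel A fun _ => false).satCQ q) : (toInterp A).satCQ q := by
  obtain ⟨h, hh⟩ := hq
  refine ⟨h, fun a ha => ?_⟩
  have hs := hh a ha
  cases a with
  | F x => exact (minModel_false_FS A _).1 hs
  | T x =>
    have hFq : At.F x ∈ q := by_contra fun hF => hT x ⟨ha, hF⟩
    have hFA : At.F (h x) ∈ A := (minModel_false_FS A _).1 (hh _ hFq)
    rcases hs with hTA | ⟨hu, -⟩
    · exact hTA
    · exact absurd hFA hu.2.1
  | A x => exact absurd ha (hqA x)
  | R r x y => exact hs

lemma toInterp_satCQ_of_minModel_const (hqA : noA q) (h0 : isZeroCQ q)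
    (hq : ∀ b : Bool, (minModel A fun _ => b).satCQ q) : (toInterp A).satCQ q :=
  h0.elim (fun hF => toInterp_satCQ_of_minModel_true A hqA hF (hq true))
    (fun hT => toInterp_satCQ_of_minModel_false A hqA hT (hq false))

end MinModel

theorem statement_1_general {σ V : Type}
    (q : Set (At σ V)) (hqA : noA q)
    (h0 : isZeroCQ q) :
    (∀ (α : Type) (A : Set (At σ α)), A.Finite →
        (covACert A q ↔ (toInterp A).satCQ q)) ∧
    (∀ (α : Type) (A : Set (At σ α)), A.Finite → twinFree A →
        (covABotCert A q ↔ (toInterp A).satCQ q)) := by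
  refine ⟨fun α A _ => ⟨fun hc => ?_, fun hq c => ?_⟩,
    fun α A _ hA => ⟨fun hc => ?_, fun hq c _ => ?_⟩⟩
  · exact toInterp_satCQ_of_minModel_const A hqA h0 fun b => hc _
  · exact minModel_satCQ_of_toInterp_satCQ A c hq
  · exact toInterp_satCQ_of_minModel_const A hqA h0 fun b =>
      hc _ (disjointFT_minModel_const A hA b)
  · exact minModel_satCQ_of_toInterp_satCQ A c hq

/-- Let `q` be a `0`-CQ. Then for every ABox `A`,
`cov_A, A ⊨ q` iff there is a homomorphism from `q` into `A` viewed as an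
interpretation; moreover, for every twinless ABox `A`, `cov_A^⊥, A ⊨ q` iff there
is a homomorphism from `q` into `A` viewed as an interpretation. -/
theorem statement_1 {σ V : Type}
    (q : Set (At σ V)) (hqfin : q.Finite) (hqA : noA q) (hqconn : connCQ q)
    (h0 : isZeroCQ q) :
    (∀ (α : Type) (A : Set (At σ α)), A.Finite →
        (covACert A q ↔ (toInterp A).satCQ q)) ∧
    (∀ (α : Type) (A : Set (At σ α)), A.Finite → twinFree A →
        (covABotCert A q ↔ (toInterp A).satCQ q)) :=
  statement_1_general q hqA h0

end DS
end

section
/- Let Q = (O, q) with O ∈ {cov_A, cov_A^⊥} and q a 1-CQ. Then O, C ⊨ q for every cactus C ∈ K_Q. -/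
attribute [local instance] Classical.propDecidable

namespace DS

/-- A `1`-CQ with unique solitary `F`-node `x` (and at least one solitary `T`). -/
def isOneCQ {σ V : Type} (q : Set (At σ V)) (x : V) : Prop :=
  solF q x ∧ (∀ z, solF q z → z = x) ∧ (∃ y, solT q y)

/-- The class `K_Q` of cactuses for `Q = (O, q)` with `q` a `1`-CQ whose unique
solitary `F`-node is `x`: the least class of ABoxes (over the variables of `q`,
regarded as individuals) containing `q` and closed under budding, which replaces
a solitary `T(y)` by a fresh copy of `(q ∖ {F(x)}) ∪ {A(x)}` with `x` renamed to
`y` and all other variables fresh. -/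
inductive Cactus {σ V : Type} (q : Set (At σ V)) (x : V) : Set (At σ V) → Prop
  | base : Cactus q x q
  | bud (C : Set (At σ V)) (hC : Cactus q x C) (y : V)
      (hyT : At.T y ∈ C) (hyF : At.F y ∉ C)
      (ρ : V → V) (hinj : Function.Injective ρ) (hρx : ρ x = y)
      (hfresh : ∀ v : V, v ≠ x → ¬ occ C (ρ v)) :
      Cactus q x ((C \ {At.T y}) ∪ At.map ρ '' (insert (At.A x) (q \ {At.F x})))

/-! A cactus is obtained from `q` by budding, so we argue by induction. Fix a minimal model,
i.e. a choice `c`, of the new cactus. The root `y` of the last bud is undecided there. If `c`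
makes `y` an `F`, then `q` maps onto the bud, with `x ↦ y`. If `c` makes `y` a `T`, the minimal
model of the previous cactus (for the same `c`) is contained in the new one, so the match of `q`
given by induction survives. -/

theorem Interp.satCQ_mono {σ δ V : Type} {I J : Interp σ δ} {q : Set (At σ V)}
    (hIJ : ∀ a, I.satAt a → J.satAt a) (hI : I.satCQ q) : J.satCQ q :=
  let ⟨h, hh⟩ := hI
  ⟨h, fun a ha => hIJ _ (hh a ha)⟩

theorem satAt_minModel_of_mem {σ α : Type} {A : Set (At σ α)} {a : At σ α} (c : α → Bool)
    (ha : a ∈ A) : (minModel A c).satAt a := by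
  cases a with
  | F v => exact Or.inl ha
  | T v => exact Or.inl ha
  | A v => exact ha
  | R r u v => exact ha

theorem satCQ_minModel_self {σ α : Type} (A : Set (At σ α)) (c : α → Bool) :
    (minModel A c).satCQ A :=
  ⟨id, fun a ha => by cases a <;> exact satAt_minModel_of_mem c ha⟩

def bud {σ V : Type} (q : Set (At σ V)) (x : V) (C : Set (At σ V)) (y : V) (ρ : V → V) :
    Set (At σ V) :=
  (C \ {At.T y}) ∪ At.map ρ '' (insert (At.A x) (q \ {At.F x}))

section Budding

variable {σ V : Type} {q C : Set (At σ V)} {x y : V} {ρ : V → V}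

theorem eq_of_occ_fresh (hfresh : ∀ v, v ≠ x → ¬ occ C (ρ v)) {u : V} (hu : occ C (ρ u)) :
    u = x := by
  by_contra hux
  exact hfresh u hux hu

theorem F_not_mem_bud_image (hfresh : ∀ v, v ≠ x → ¬ occ C (ρ v)) {v : V} (hv : occ C v) :
    At.F v ∉ At.map ρ '' insert (At.A x) (q \ {At.F x}) := by
  rintro ⟨a, ha, hav⟩
  cases a <;> simp only [At.map, At.F.injEq, reduceCtorEq] at hav
  subst hav
  obtain rfl := eq_of_occ_fresh hfresh hv
  simp at ha

theorem T_not_mem_bud_image (hfresh : ∀ v, v ≠ x → ¬ occ C (ρ v)) (hTx : At.T x ∉ q) {v : V}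
    (hv : occ C v) : At.T v ∉ At.map ρ '' insert (At.A x) (q \ {At.F x}) := by
  rintro ⟨a, ha, hav⟩
  cases a <;> simp only [At.map, At.T.injEq, reduceCtorEq] at hav
  subst hav
  obtain rfl := eq_of_occ_fresh hfresh hv
  exact hTx (by simpa using ha)

theorem undecided_bud_root (hfresh : ∀ v, v ≠ x → ¬ occ C (ρ v)) (hTx : At.T x ∉ q)
    (hyT : At.T y ∈ C) (hyF : At.F y ∉ C) (hρx : ρ x = y) : undecided (bud q x C y ρ) y := by
  have hy : occ C y := ⟨At.T y, hyT, rfl⟩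
  refine ⟨Or.inr ⟨At.A x, Set.mem_insert _ _, by rw [At.map, hρx]⟩, ?_, ?_⟩
  · rintro (⟨hF, -⟩ | hF)
    exacts [hyF hF, F_not_mem_bud_image hfresh hy hF]
  · rintro (⟨-, hT⟩ | hT)
    exacts [hT rfl, T_not_mem_bud_image hfresh hTx hy hT]

theorem undecided_bud_of_undecided (hfresh : ∀ v, v ≠ x → ¬ occ C (ρ v)) (hTx : At.T x ∉ q)
    {v : V} (hv : undecided C v) : undecided (bud q x C y ρ) v := by
  obtain ⟨hA, hF, hT⟩ := hv
  have hocc : occ C v := ⟨At.A v, hA, rfl⟩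
  refine ⟨Or.inl ⟨hA, by simp⟩, ?_, ?_⟩
  · rintro (⟨hF', -⟩ | hF')
    exacts [hF hF', F_not_mem_bud_image hfresh hocc hF']
  · rintro (⟨hT', -⟩ | hT')
    exacts [hT hT', T_not_mem_bud_image hfresh hTx hocc hT']

theorem satCQ_minModel_bud_of_root_F (hyund : undecided (bud q x C y ρ) y) (hρx : ρ x = y)
    {c : V → Bool} (hcy : c y = true) : (minModel (bud q x C y ρ) c).satCQ q := by
  refine ⟨ρ, fun a ha => ?_⟩
  by_cases hax : a = At.F x
  · subst hax
    rw [At.map, hρx]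
    exact Or.inr ⟨hyund, hcy⟩
  · exact satAt_minModel_of_mem c (Or.inr ⟨a, Set.mem_insert_of_mem _ ⟨ha, hax⟩, rfl⟩)

theorem satAt_minModel_bud_of_root_T (hfresh : ∀ v, v ≠ x → ¬ occ C (ρ v)) (hTx : At.T x ∉ q)
    (hyund : undecided (bud q x C y ρ) y) {c : V → Bool} (hcy : c y = false) (a : At σ V)
    (ha : (minModel C c).satAt a) : (minModel (bud q x C y ρ) c).satAt a := by
  cases a with
  | F v =>
    rcases ha with hF | ⟨hv, hcv⟩
    exacts [Or.inl (Or.inl ⟨hF, by simp⟩), Or.inr ⟨undecided_bud_of_undecided hfresh hTx hv, hcv⟩]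
  | T v =>
    rcases ha with hT | ⟨hv, hcv⟩
    · by_cases hvy : v = y
      · subst hvy
        exact Or.inr ⟨hyund, hcy⟩
      · exact Or.inl (Or.inl ⟨hT, by simpa using hvy⟩)
    · exact Or.inr ⟨undecided_bud_of_undecided hfresh hTx hv, hcv⟩
  | A v => exact Or.inl ⟨ha, by simp⟩
  | R r u v => exact Or.inl ⟨ha, by simp⟩

end Budding

theorem covACert_of_cactus {σ V : Type} {q : Set (At σ V)} {x : V} (hTx : At.T x ∉ q)
    {C : Set (At σ V)} (hC : Cactus q x C) : covACert C q := by
  induction hC with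
  | base => exact satCQ_minModel_self q
  | bud C _ y hyT hyF ρ _ hρx hfresh ih =>
    intro c
    have hyund : undecided (bud q x C y ρ) y := undecided_bud_root hfresh hTx hyT hyF hρx
    cases hcy : c y
    · exact Interp.satCQ_mono (satAt_minModel_bud_of_root_T hfresh hTx hyund hcy) (ih c)
    · exact satCQ_minModel_bud_of_root_F hyund hρx hcy

theorem covABotCert_of_covACert {σ α V : Type} {A : Set (At σ α)} {q : Set (At σ V)}
    (h : covACert A q) : covABotCert A q :=
  fun c _ => h c

theorem statement_5_general {σ V : Type}
    (q : Set (At σ V)) (x : V)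
    (h1 : isOneCQ q x) :
    ∀ C : Set (At σ V), Cactus q x C → covACert C q ∧ covABotCert C q := by
  intro C hC
  have hcov : covACert C q := covACert_of_cactus h1.1.2 hC
  exact ⟨hcov, covABotCert_of_covACert hcov⟩

/-- Let `Q = (O, q)` with `O ∈ {cov_A, cov_A^⊥}` and `q` a
`1`-CQ. Then `O, C ⊨ q` for every cactus `C ∈ K_Q`. -/
theorem statement_5 {σ V : Type} [Infinite V]
    (q : Set (At σ V)) (x : V)
    (hqfin : q.Finite) (hqA : noA q) (hqconn : connCQ q)
    (h1 : isOneCQ q x) :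
    ∀ C : Set (At σ V), Cactus q x C → covACert C q ∧ covABotCert C q :=
  statement_5_general q x h1

end DS
end

section
/- Let q be a 1-CQ whose unique solitary F-node is x and whose solitary T-nodes are y_1, …, y_n, let O ∈ {cov_A, cov_A^⊥}, Q = (O, q), q′ = q ∖ {F(x), T(y_1), …, T(y_n)}, and let Π_Q be the datalog program with rules (1) G ← F(x) ∧ q′ ∧ P(y_1) ∧ … ∧ P(y_n); (2) P(x) ← T(x); (3) P(x) ← A(x) ∧ q′ ∧ P(y_1) ∧ … ∧ P(y_n); and, when O = cov_A^⊥ only, (4) G ← F(x) ∧ T(x), where P is a fresh unary predicate and G a nullary goal predicate. Then for every ABox A (not using P or G) the following are equivalent: (i) O, A ⊨ q; (ii) Π_Q, A ⊨ G; (iii) there is a homomorphism h : C → A for some cactus C ∈ K_Q, or O = cov_A^⊥ and A contains an FT-twin. -/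
/-!
(i) ⇔ (ii): every derivable `P(a)` is, in each minimal model, either `T(a)` or already forces a
match of `q`, so rules (1) and (4) are sound. Conversely, if `G` is not derivable, the minimal model
that makes an undecided individual `T` exactly when `P` is derivable there refutes `q`.

(ii) ⇔ (iii): a cactus is a derivation of `G` laid out as an ABox. Folding the image of a cactus
bud by bud yields rule (3) at the root of every bud and finally rule (1). Conversely, a derivation
is unfolded by budding at every solitary `T`-atom whose `P` came from rule (3); this terminates by
induction on the derivation depth and, for a fixed depth, on the number of atoms still needing it.
-/

attribute [local instance] Classical.propDecidable

namespace DS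

/-- `q′ = q ∖ {F(x), T(y₁), …, T(yₙ)}`: the body of the datalog rules of `Π_Q`. -/
def qBody {σ V : Type} (q : Set (At σ V)) (x : V) : Set (At σ V) :=
  q \ (insert (At.F x) {a | ∃ z, solT q z ∧ a = At.T z})

/-- Derivability of the facts `P(a)` from the ABox `A` by rules (2) and (3) of
the datalog program `Π_Q`:  `P(x) ← T(x)` and `P(x) ← A(x), q′, P(y₁), …, P(yₙ)`. -/
inductive PDer {σ α V : Type} (A : Set (At σ α)) (q : Set (At σ V)) (x : V) : α → Prop
  | fromT (a : α) : At.T a ∈ A → PDer A q x a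
  | rule (h : V → α) (hA : At.A (h x) ∈ A)
      (hbody : ∀ b ∈ qBody q x, At.map h b ∈ A)
      (hP : ∀ z, solT q z → PDer A q x (h z)) : PDer A q x (h x)

/-- Derivability of the goal `G` from `A` via `Π_Q`: rule (1)
`G ← F(x), q′, P(y₁), …, P(yₙ)` and, when `bot = true` (the case `O = cov_A^⊥`),
also rule (4) `G ← F(x), T(x)`. -/
def GDer {σ α V : Type} (bot : Bool) (A : Set (At σ α)) (q : Set (At σ V)) (x : V) : Prop :=
  (∃ h : V → α, At.F (h x) ∈ A ∧ (∀ b ∈ qBody q x, At.map h b ∈ A) ∧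
      ∀ z, solT q z → PDer A q x (h z)) ∨
  (bot = true ∧ ∃ a, At.F a ∈ A ∧ At.T a ∈ A)

open Function

section Atoms

variable {σ α β γ : Type}

namespace At

@[simp] lemma map_id (b : At σ α) : b.map id = b := by
  cases b <;> rfl

lemma map_map (g : α → β) (f : β → γ) (b : At σ α) : (b.map g).map f = b.map (f ∘ g) := by
  cases b <;> rfl

lemma map_congr {f g : α → β} {b : At σ α} (h : ∀ v ∈ b.vars, f v = g v) :
    b.map f = b.map g := by
  cases b <;> simp_all [map, vars]

@[simp] lemma map_eq_F_iff {f : α → β} {b : At σ α} {v : β} :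
    b.map f = .F v ↔ ∃ u, b = .F u ∧ f u = v := by
  cases b <;> simp [map]

@[simp] lemma map_eq_T_iff {f : α → β} {b : At σ α} {v : β} :
    b.map f = .T v ↔ ∃ u, b = .T u ∧ f u = v := by
  cases b <;> simp [map]

end At

lemma finite_setOf_occ {C : Set (At σ α)} (hC : C.Finite) : {v | occ C v}.Finite := by
  have hocc : {v | occ C v} = ⋃ b ∈ C, b.vars := by
    ext v
    simp [occ]
  rw [hocc]
  exact hC.biUnion fun b _ => by cases b <;> simp [At.vars]

lemma finite_setOf_T_mem {C : Set (At σ α)} (hC : C.Finite) : {v | At.T v ∈ C}.Finite :=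
  hC.preimage fun _ _ _ _ h => At.T.inj h

lemma exists_injective_fresh [Infinite α] {S : Set α} (hS : S.Finite) {x z : α} (hz : z ∈ S) :
    ∃ ρ : α → α, Injective ρ ∧ ρ x = z ∧ ∀ v, v ≠ x → ρ v ∉ S := by
  obtain ⟨e⟩ : Nonempty (α ≃ ↥Sᶜ) := Cardinal.eq.1
    (Cardinal.mk_compl_of_infinite S (hS.lt_aleph0.trans_le (Cardinal.aleph0_le_mk α))).symm
  have he : ∀ v, (e v : α) ∉ S := fun v => (e v).2
  refine ⟨update (fun v => (e v : α)) x z, ?_, update_self .., fun v hv => by simpa [hv] using he v⟩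
  intro a b hab
  by_cases ha : a = x <;> by_cases hb : b = x
  · rw [ha, hb]
  · simp only [ha, hb, update_self, ne_eq, not_false_eq_true, update_of_ne] at hab
    exact absurd (hab ▸ hz) (he b)
  · simp only [ha, hb, update_self, ne_eq, not_false_eq_true, update_of_ne] at hab
    exact absurd (hab ▸ hz) (he a)
  · simp only [ha, hb, ne_eq, not_false_eq_true, update_of_ne] at hab
    exact e.injective (Subtype.ext hab)

end Atoms

section Query

variable {σ V : Type} {q : Set (At σ V)} {x : V} {b : At σ V}

lemma mem_qBody_iff : b ∈ qBody q x ↔ b ∈ q ∧ b ≠ At.F x ∧ ∀ z, solT q z → b ≠ At.T z := by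
  simp [qBody]

lemma eq_F_or_mem_qBody_or_solT (hb : b ∈ q) :
    b = At.F x ∨ b ∈ qBody q x ∨ ∃ z, solT q z ∧ b = At.T z := by
  by_contra! h
  exact h.2.1 (mem_qBody_iff.2 ⟨hb, h.1, h.2.2⟩)

lemma finite_setOf_solT (hq : q.Finite) : {z | solT q z}.Finite :=
  (finite_setOf_T_mem hq).subset fun _ hz => hz.1

end Query

section MinimalModels

variable {σ α V : Type} {A : Set (At σ α)} {c : α → Bool} {q : Set (At σ V)} {x : V}

lemma minModel_FS_and_TS_iff {a : α} :
    (minModel A c).FS a ∧ (minModel A c).TS a ↔ At.F a ∈ A ∧ At.T a ∈ A := by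
  simp only [minModel, undecided]
  constructor
  · rintro ⟨hF | ⟨⟨-, hF', hT'⟩, hc⟩, hT | ⟨⟨-, hF'', hT''⟩, hc'⟩⟩ <;> simp_all
  · exact fun ⟨hF, hT⟩ => ⟨.inl hF, .inl hT⟩

lemma minModel_FS_or_TS {a : α} (hA : At.A a ∈ A) :
    (minModel A c).FS a ∨ (minModel A c).TS a := by
  by_cases hF : At.F a ∈ A
  · exact .inl (.inl hF)
  by_cases hT : At.T a ∈ A
  · exact .inr (.inl hT)
  cases hc : c a
  · exact .inr (.inr ⟨⟨hA, hF, hT⟩, hc⟩)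
  · exact .inl (.inr ⟨⟨hA, hF, hT⟩, hc⟩)

lemma minModel_satAt_of_mem {b : At σ α} (hb : b ∈ A) : (minModel A c).satAt b := by
  cases b with
  | F a | T a => exact .inl hb
  | A a | R r a b => exact hb

lemma minModel_satCQ_of_body {h : V → α} (hF : (minModel A c).FS (h x))
    (hbody : ∀ b ∈ qBody q x, b.map h ∈ A) (hT : ∀ z, solT q z → (minModel A c).TS (h z)) :
    (minModel A c).satCQ q := by
  refine ⟨h, fun b hb => ?_⟩
  rcases eq_F_or_mem_qBody_or_solT (x := x) hb with rfl | hb | ⟨z, hz, rfl⟩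
  · exact hF
  · exact minModel_satAt_of_mem (hbody b hb)
  · exact hT z hz

lemma PDer.minModel_TS_or_satCQ {a : α} (hp : PDer A q x a) :
    (minModel A c).TS a ∨ (minModel A c).satCQ q := by
  induction hp with
  | fromT a ha => exact .inl (.inl ha)
  | rule h hA hbody _ ih =>
    by_cases hsat : (minModel A c).satCQ q
    · exact .inr hsat
    exact .inl <| (minModel_FS_or_TS hA).resolve_left fun hF =>
      hsat (minModel_satCQ_of_body hF hbody fun z hz => (ih z hz).resolve_right hsat)

lemma GDer.minModel_satCQ {bot : Bool} (hG : GDer bot A q x)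
    (hd : bot = true → disjointFT (minModel A c)) : (minModel A c).satCQ q := by
  rcases hG with ⟨h, hF, hbody, hP⟩ | ⟨hbot, a, hFa, hTa⟩
  · by_cases hsat : (minModel A c).satCQ q
    · exact hsat
    exact minModel_satCQ_of_body (.inl hF) hbody fun z hz =>
      (hP z hz).minModel_TS_or_satCQ.resolve_right hsat
  · exact absurd ⟨.inl hFa, .inl hTa⟩ (hd hbot a)

/-- A minimal model adds only one of `F`/`T` to an individual, while the `F`- and `T`-atoms of
`q′` come in `FT`-pairs. -/
lemma map_mem_of_minModel_satAt (huniq : ∀ z, solF q z → z = x) {g : V → α}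
    (hg : ∀ b ∈ q, (minModel A c).satAt (b.map g)) {b : At σ V} (hb : b ∈ qBody q x) :
    b.map g ∈ A := by
  obtain ⟨hbq, hbF, hbT⟩ := mem_qBody_iff.1 hb
  cases b with
  | F u =>
    have hTu : At.T u ∈ q := by_contra fun hTu => hbF (by rw [huniq u ⟨hbq, hTu⟩])
    exact (minModel_FS_and_TS_iff.1 ⟨hg _ hbq, hg _ hTu⟩).1
  | T u =>
    have hFu : At.F u ∈ q := by_contra fun hFu => hbT u ⟨hbq, hFu⟩ rfl
    exact (minModel_FS_and_TS_iff.1 ⟨hg _ hFu, hg _ hbq⟩).2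
  | A u | R r u v => exact hg _ hbq

lemma exists_minModel_not_satCQ (hFx : At.F x ∈ q) (huniq : ∀ z, solF q z → z = x)
    {bot : Bool} (hG : ¬ GDer bot A q x) :
    ∃ c : α → Bool, (bot = true → disjointFT (minModel A c)) ∧ ¬ (minModel A c).satCQ q := by
  refine ⟨fun a => decide ¬ PDer A q x a,
    fun hbot a hFT => hG (.inr ⟨hbot, a, minModel_FS_and_TS_iff.1 hFT⟩), ?_⟩
  rintro ⟨g, hg⟩
  have hbody : ∀ b ∈ qBody q x, b.map g ∈ A := fun b hb => map_mem_of_minModel_satAt huniq hg hb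
  have hP : ∀ z, solT q z → PDer A q x (g z) := by
    intro z hz
    rcases hg _ hz.1 with hT | ⟨-, hc⟩
    · exact .fromT _ hT
    · simpa using hc
  refine hG (.inl ⟨g, ?_, hbody, hP⟩)
  rcases hg _ hFx with hF | ⟨hu, hc⟩
  · exact hF
  · exact absurd (PDer.rule g hu.1 hbody hP) (by simpa using hc)

end MinimalModels

section Cactus

variable {σ α V : Type} {A : Set (At σ α)} {q : Set (At σ V)} {x : V}

/-- With `P = PDer A q x`, the atoms matched only up to `P` are those of a cactus still waiting
to be budded. -/
def MapsUpTo (P : α → Prop) (A : Set (At σ α)) (C : Set (At σ V)) (g : V → α)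
    (b : At σ V) : Prop :=
  b.map g ∈ A ∨ ∃ z, solT C z ∧ b = At.T z ∧ P (g z)

def HomUpTo (P : α → Prop) (A : Set (At σ α)) (C : Set (At σ V)) (g : V → α) : Prop :=
  ∀ b ∈ C, MapsUpTo P A C g b

lemma MapsUpTo.mono {P Q : α → Prop} (hPQ : ∀ a, P a → Q a) {C : Set (At σ V)} {g : V → α}
    {b : At σ V} : MapsUpTo P A C g b → MapsUpTo Q A C g b
  | .inl h => .inl h
  | .inr ⟨z, hz, hb, hp⟩ => .inr ⟨z, hz, hb, hPQ _ hp⟩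

def budAt (q : Set (At σ V)) (x : V) (C : Set (At σ V)) (y : V) (ρ : V → V) : Set (At σ V) :=
  (C \ {At.T y}) ∪ At.map ρ '' (insert (At.A x) (q \ {At.F x}))

lemma map_mem_bud {C : Set (At σ V)} {y : V} {ρ : V → V} {b : At σ V} (hb : b ∈ q)
    (hbF : b ≠ At.F x) : b.map ρ ∈ budAt q x C y ρ :=
  .inr ⟨b, .inr ⟨hb, hbF⟩, rfl⟩

lemma F_mem_bud {C : Set (At σ V)} {y : V} {ρ : V → V} {v : V} (h : At.F v ∈ budAt q x C y ρ) :
    At.F v ∈ C ∨ ∃ u, u ≠ x ∧ At.F u ∈ q ∧ ρ u = v := by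
  rcases h with ⟨h, -⟩ | ⟨b, hb | ⟨hbq, hbF⟩, hbv⟩
  · exact .inl h
  · simp [hb, At.map] at hbv
  · obtain ⟨u, rfl, rfl⟩ := At.map_eq_F_iff.1 hbv
    exact .inr ⟨u, fun h => hbF (by rw [h]; rfl), hbq, rfl⟩

lemma solT_bud_of_solT {C : Set (At σ V)} {y : V} {ρ : V → V}
    (hfresh : ∀ v, v ≠ x → ¬ occ C (ρ v)) {w : V} (hw : solT C w) (hwy : w ≠ y) :
    solT (budAt q x C y ρ) w := by
  refine ⟨.inl ⟨hw.1, by simpa using hwy⟩, fun hF => ?_⟩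
  rcases F_mem_bud hF with hF | ⟨u, hux, -, rfl⟩
  · exact hw.2 hF
  · exact hfresh u hux ⟨_, hw.1, rfl⟩

lemma solT_bud_of_solT_q (hTx : At.T x ∉ q) {C : Set (At σ V)} {y : V} {ρ : V → V}
    (hinj : Injective ρ) (hfresh : ∀ v, v ≠ x → ¬ occ C (ρ v)) {w : V} (hw : solT q w) :
    solT (budAt q x C y ρ) (ρ w) := by
  have hwx : w ≠ x := fun h => hTx (h ▸ hw.1)
  refine ⟨map_mem_bud hw.1 (by simp), fun hF => ?_⟩
  rcases F_mem_bud hF with hF | ⟨u, -, hFu, hu⟩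
  · exact hfresh w hwx ⟨_, hF, rfl⟩
  · exact hw.2 (hinj hu ▸ hFu)

lemma MapsUpTo.budAt_of_mem {P : α → Prop} {C : Set (At σ V)} {y : V} {ρ : V → V}
    (hfresh : ∀ v, v ≠ x → ¬ occ C (ρ v)) {g g' : V → α} (hgg' : ∀ v, occ C v → g' v = g v)
    {b : At σ V} (hb : b ∈ C) (hby : b ≠ At.T y) (h : MapsUpTo P A C g b) :
    MapsUpTo P A (budAt q x C y ρ) g' b := by
  rcases h with h | ⟨w, hw, rfl, hp⟩
  · rw [← At.map_congr fun v hv => hgg' v ⟨b, hb, hv⟩] at h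
    exact .inl h
  · refine .inr ⟨w, solT_bud_of_solT hfresh hw fun h => hby (h ▸ rfl), rfl, ?_⟩
    rwa [hgg' w ⟨_, hb, rfl⟩]

lemma mapsUpTo_budAt_of_mem_copy {P : α → Prop} (hTx : At.T x ∉ q) {C : Set (At σ V)} {y : V}
    {ρ : V → V} (hinj : Injective ρ) (hfresh : ∀ v, v ≠ x → ¬ occ C (ρ v)) {g : V → α}
    (hA : At.A (g (ρ x)) ∈ A) (hbody : ∀ b ∈ qBody q x, b.map (g ∘ ρ) ∈ A)
    (hP : ∀ w, solT q w → P (g (ρ w))) {b : At σ V}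
    (hb : b ∈ At.map ρ '' (insert (At.A x) (q \ {At.F x}))) :
    MapsUpTo P A (budAt q x C y ρ) g b := by
  obtain ⟨b, hb | ⟨hbq, hbF⟩, rfl⟩ := hb
  · exact .inl (hb ▸ hA)
  rcases eq_F_or_mem_qBody_or_solT (x := x) hbq with h | hb | ⟨w, hw, rfl⟩
  · exact absurd h hbF
  · exact .inl (At.map_map ρ g b ▸ hbody b hb)
  · exact .inr ⟨ρ w, solT_bud_of_solT_q hTx hinj hfresh hw, rfl, hP w hw⟩

lemma Cactus.finite {C : Set (At σ V)} (hq : q.Finite) (hC : Cactus q x C) : C.Finite := by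
  induction hC with
  | base => exact hq
  | bud C _ y _ _ ρ _ _ _ ih => exact ih.sdiff.union ((hq.sdiff.insert _).image _)

/-- An `FT`-pair of `q′` is copied to an `FT`-pair of `D`, so its `T`-atom is not solitary
in `D` and is matched into `A`. -/
lemma HomUpTo.qBody_and_PDer (hTx : At.T x ∉ q) {D : Set (At σ V)} {ρ : V → V} {g : V → α}
    (hg : HomUpTo (PDer A q x) A D g) (hqD : ∀ b ∈ q, b ≠ At.F x → b.map ρ ∈ D) :
    (∀ b ∈ qBody q x, b.map (g ∘ ρ) ∈ A) ∧ ∀ w, solT q w → PDer A q x (g (ρ w)) := by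
  refine ⟨fun b hb => ?_, fun w hw => ?_⟩
  · obtain ⟨hbq, hbF, hbT⟩ := mem_qBody_iff.1 hb
    rcases hg _ (hqD b hbq hbF) with h | ⟨z, hz, hbz, -⟩
    · rwa [At.map_map] at h
    obtain ⟨w, rfl, rfl⟩ := At.map_eq_T_iff.1 hbz
    have hwx : w ≠ x := fun h => hTx (h ▸ hbq)
    have hFw : At.F w ∈ q := by_contra fun hFw => hbT w ⟨hbq, hFw⟩ rfl
    exact (hz.2 (hqD _ hFw (by simpa using hwx))).elim
  · rcases hg _ (hqD _ hw.1 (by simp)) with h | ⟨z, -, hz, hp⟩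
    · exact .fromT _ h
    · obtain rfl : ρ w = z := At.T.inj hz
      exact hp

lemma Cactus.rule_one_of_homUpTo (hFx : At.F x ∈ q) (hTx : At.T x ∉ q) {C : Set (At σ V)}
    (hC : Cactus q x C) {g : V → α} (hg : HomUpTo (PDer A q x) A C g) :
    At.F (g x) ∈ A ∧ (∀ b ∈ qBody q x, b.map g ∈ A) ∧ ∀ z, solT q z → PDer A q x (g z) := by
  induction hC generalizing g with
  | base =>
    obtain ⟨hbody, hP⟩ := hg.qBody_and_PDer (ρ := id) hTx fun b hb _ => by simpa using hb
    refine ⟨?_, by simpa using hbody, hP⟩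
    rcases hg _ hFx with h | ⟨z, -, h, -⟩
    · exact h
    · cases h
  | bud C _ y hyT hyF ρ _ hρx _ ih =>
    apply ih
    obtain ⟨hbody, hP⟩ := hg.qBody_and_PDer (D := budAt q x C y ρ) hTx fun b hb => map_mem_bud hb
    have hA : At.A (g y) ∈ A := by
      rcases hg _ (.inr ⟨_, .inl rfl, rfl⟩) with h | ⟨z, -, h, -⟩
      · simpa [At.map, hρx] using h
      · cases h
    have hPy : PDer A q x (g y) := hρx ▸ PDer.rule (g ∘ ρ) (by simpa [hρx]) hbody hP
    intro b hb
    by_cases hby : b = At.T y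
    · exact .inr ⟨y, ⟨hyT, hyF⟩, hby, hPy⟩
    rcases hg b (.inl ⟨hb, hby⟩) with h | ⟨z, ⟨-, hzF⟩, rfl, hp⟩
    · exact .inl h
    · exact .inr ⟨z, ⟨hb, fun h => hzF (.inl ⟨h, by simp⟩)⟩, rfl, hp⟩

end Cactus

section Unfolding

variable {σ α V : Type} {A : Set (At σ α)} {q : Set (At σ V)} {x : V}

/-- `P(a)` has a derivation of depth at most `n`. -/
def PDerN (A : Set (At σ α)) (q : Set (At σ V)) (x : V) : ℕ → α → Prop
  | 0, _ => False
  | n + 1, a => At.T a ∈ A ∨ ∃ h : V → α, h x = a ∧ At.A a ∈ A ∧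
      (∀ b ∈ qBody q x, b.map h ∈ A) ∧ ∀ z, solT q z → PDerN A q x n (h z)

lemma PDerN.succ : ∀ {n : ℕ} {a : α}, PDerN A q x n a → PDerN A q x (n + 1) a
  | 0, _, h => h.elim
  | _ + 1, _, .inl h => .inl h
  | _ + 1, _, .inr ⟨h, hx, hA, hbody, hP⟩ => .inr ⟨h, hx, hA, hbody, fun z hz => (hP z hz).succ⟩

lemma PDerN.mono {m n : ℕ} (hmn : m ≤ n) {a : α} (h : PDerN A q x m a) : PDerN A q x n a :=
  monotone_nat_of_le_succ (f := fun n => PDerN A q x n a) (fun _ => PDerN.succ) hmn h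

lemma PDerN.exists_uniform {ι : Type} {s : Set ι} (hs : s.Finite) {f : ι → α}
    (h : ∀ i ∈ s, ∃ n, PDerN A q x n (f i)) : ∃ n, ∀ i ∈ s, PDerN A q x n (f i) := by
  choose! m hm using h
  obtain ⟨N, hN⟩ := (hs.image m).bddAbove
  exact ⟨N, fun i hi => (hm i hi).mono (hN ⟨i, hi, rfl⟩)⟩

lemma PDer.exists_PDerN (hq : q.Finite) {a : α} (hp : PDer A q x a) : ∃ n, PDerN A q x n a := by
  induction hp with
  | fromT a ha => exact ⟨1, .inl ha⟩
  | rule h hA hbody _ ih =>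
    obtain ⟨n, hn⟩ := PDerN.exists_uniform (finite_setOf_solT hq) ih
    exact ⟨n + 1, .inr ⟨h, rfl, hA, hbody, hn⟩⟩

/-- The new copy of `q` is matched by the premises of the last rule of the depth-`(n + 1)`
derivation at `T z`, whose `P`-premises have depth `n`. -/
lemma exists_bud_homUpTo [Infinite V] (hTx : At.T x ∉ q) {C : Set (At σ V)} (hC : Cactus q x C)
    (hCfin : C.Finite) {n : ℕ} {g : V → α} (hg : HomUpTo (PDerN A q x (n + 1)) A C g) {z : V}
    (hz : solT C z) (hbad : ¬ MapsUpTo (PDerN A q x n) A C g (At.T z)) :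
    ∃ C' g', Cactus q x C' ∧ HomUpTo (PDerN A q x (n + 1)) A C' g' ∧
      {b ∈ C' | ¬ MapsUpTo (PDerN A q x n) A C' g' b} ⊆
        {b ∈ C | ¬ MapsUpTo (PDerN A q x n) A C g b} \ {At.T z} := by
  obtain ⟨h₀, hh₀x, hA, hbody, hP⟩ : ∃ h₀ : V → α, h₀ x = g z ∧ At.A (g z) ∈ A ∧
      (∀ b ∈ qBody q x, b.map h₀ ∈ A) ∧ ∀ w, solT q w → PDerN A q x n (h₀ w) := by
    rcases hg _ hz.1 with h | ⟨z', -, hzz', h | h⟩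
    · exact absurd (.inl h) hbad
    · exact absurd (.inl (At.T.inj hzz' ▸ h)) hbad
    · exact At.T.inj hzz' ▸ h
  obtain ⟨ρ, hinj, hρx, hfresh⟩ :
      ∃ ρ : V → V, Injective ρ ∧ ρ x = z ∧ ∀ v, v ≠ x → ¬ occ C (ρ v) :=
    exists_injective_fresh (finite_setOf_occ hCfin) ⟨_, hz.1, rfl⟩
  set g' := extend ρ h₀ g
  have hg'ρ : g' ∘ ρ = h₀ := funext (hinj.extend_apply h₀ g)
  have hg'C : ∀ v, occ C v → g' v = g v := by
    intro v hv
    by_cases hr : ∃ u, ρ u = v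
    · obtain ⟨u, rfl⟩ := hr
      obtain rfl : u = x := by_contra fun hux => hfresh u hux hv
      rw [← comp_apply (f := g'), hg'ρ, hh₀x, hρx]
    · exact extend_apply' _ _ _ hr
  have hnew : ∀ b ∈ At.map ρ '' (insert (At.A x) (q \ {At.F x})),
      MapsUpTo (PDerN A q x n) A (budAt q x C z ρ) g' b := fun b hb =>
    mapsUpTo_budAt_of_mem_copy hTx hinj hfresh (by rwa [← comp_apply (f := g'), hg'ρ, hh₀x])
      (by rwa [hg'ρ]) (by simpa [← hg'ρ] using hP) hb
  refine ⟨budAt q x C z ρ, g', hC.bud C z hz.1 hz.2 ρ hinj hρx hfresh, ?_, ?_⟩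
  · rintro b (⟨hb, hbz⟩ | hb)
    · exact (hg b hb).budAt_of_mem hfresh hg'C hb hbz
    · exact (hnew b hb).mono fun _ => PDerN.succ
  · rintro b ⟨⟨hb, hbz⟩ | hb, hb'⟩
    · exact ⟨⟨hb, fun h => hb' (h.budAt_of_mem hfresh hg'C hb hbz)⟩, hbz⟩
    · exact absurd (hnew b hb) hb'

lemma Cactus.exists_homUpTo_of_succ [Infinite V] (hq : q.Finite) (hTx : At.T x ∉ q)
    {n : ℕ} {C : Set (At σ V)} (hC : Cactus q x C) {g : V → α}
    (hg : HomUpTo (PDerN A q x (n + 1)) A C g) :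
    ∃ C' g', Cactus q x C' ∧ HomUpTo (PDerN A q x n) A C' g' := by
  induction hk : {b ∈ C | ¬ MapsUpTo (PDerN A q x n) A C g b}.ncard using Nat.strong_induction_on
    generalizing C g with
  | _ k ih =>
  by_cases hgood : HomUpTo (PDerN A q x n) A C g
  · exact ⟨C, g, hC, hgood⟩
  obtain ⟨b, hb, hbad⟩ : ∃ b ∈ C, ¬ MapsUpTo (PDerN A q x n) A C g b := by
    simpa [HomUpTo] using hgood
  rcases hg b hb with h | ⟨z, hz, rfl, -⟩
  · exact absurd (.inl h) hbad
  have hCfin := hC.finite hq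
  obtain ⟨C', g', hC', hg', hsub⟩ := exists_bud_homUpTo hTx hC hCfin hg hz hbad
  refine ih _ (hk ▸ Set.ncard_lt_ncard ?_ (hCfin.subset (Set.sep_subset _ _))) hC' hg' rfl
  exact hsub.trans_ssubset (Set.sdiff_singleton_ssubset.2 ⟨hb, hbad⟩)

lemma Cactus.exists_hom_of_homUpTo_PDerN [Infinite V] (hq : q.Finite) (hTx : At.T x ∉ q)
    {n : ℕ} {C : Set (At σ V)} (hC : Cactus q x C) {g : V → α}
    (hg : HomUpTo (PDerN A q x n) A C g) :
    ∃ C', Cactus q x C' ∧ ∃ h : V → α, ∀ b ∈ C', b.map h ∈ A := by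
  induction n generalizing C g with
  | zero => exact ⟨C, hC, g, fun b hb => (hg b hb).resolve_right fun ⟨_, _, _, h⟩ => h⟩
  | succ n ih =>
    obtain ⟨C', g', hC', hg'⟩ := hC.exists_homUpTo_of_succ hq hTx hg
    exact ih hC' hg'

lemma Cactus.exists_hom_of_homUpTo [Infinite V] (hq : q.Finite) (hTx : At.T x ∉ q)
    {C : Set (At σ V)} (hC : Cactus q x C) {g : V → α} (hg : HomUpTo (PDer A q x) A C g) :
    ∃ C', Cactus q x C' ∧ ∃ h : V → α, ∀ b ∈ C', b.map h ∈ A := by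
  obtain ⟨N, hN⟩ := PDerN.exists_uniform (s := {z | At.T z ∈ C ∧ PDer A q x (g z)}) (f := g)
    ((finite_setOf_T_mem (hC.finite hq)).subset fun _ hz => hz.1) fun z hz => hz.2.exists_PDerN hq
  refine hC.exists_hom_of_homUpTo_PDerN hq hTx (n := N) (g := g) fun b hb => ?_
  rcases hg b hb with h | ⟨z, hz, rfl, hp⟩
  · exact .inl h
  · exact .inr ⟨z, hz, rfl, hN z ⟨hz.1, hp⟩⟩

lemma exists_rule_one_iff_exists_cactus_hom [Infinite V] (hq : q.Finite) (hFx : At.F x ∈ q)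
    (hTx : At.T x ∉ q) :
    (∃ h : V → α, At.F (h x) ∈ A ∧ (∀ b ∈ qBody q x, b.map h ∈ A) ∧
        ∀ z, solT q z → PDer A q x (h z)) ↔
      ∃ C, Cactus q x C ∧ ∃ h : V → α, ∀ b ∈ C, b.map h ∈ A := by
  constructor
  · rintro ⟨h, hF, hbody, hP⟩
    refine Cactus.base.exists_hom_of_homUpTo hq hTx (g := h) fun b hb => ?_
    rcases eq_F_or_mem_qBody_or_solT (x := x) hb with rfl | hb | ⟨z, hz, rfl⟩
    · exact .inl hF
    · exact .inl (hbody b hb)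
    · exact .inr ⟨z, hz, rfl, hP z hz⟩
  · rintro ⟨C, hC, h, hh⟩
    exact ⟨h, hC.rule_one_of_homUpTo hFx hTx fun b hb => .inl (hh b hb)⟩

end Unfolding

lemma certain_iff_forall_minModel {σ α V : Type} {bot : Bool} {A : Set (At σ α)}
    {q : Set (At σ V)} :
    (if bot = true then covABotCert A q else covACert A q) ↔
      ∀ c, (bot = true → disjointFT (minModel A c)) → (minModel A c).satCQ q := by
  cases bot <;> simp [covABotCert, covACert]

theorem statement_6_general {σ α V : Type} [Infinite V]
    (q : Set (At σ V)) (x : V)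
    (hqfin : q.Finite)
    (h1 : isOneCQ q x)
    (bot : Bool) (A : Set (At σ α)) :
    ((if bot = true then covABotCert A q else covACert A q) ↔ GDer bot A q x) ∧
    (GDer bot A q x ↔
      ((∃ C : Set (At σ V), Cactus q x C ∧ ∃ h : V → α, ∀ b ∈ C, At.map h b ∈ A) ∨
        (bot = true ∧ ∃ a, At.F a ∈ A ∧ At.T a ∈ A))) := by
  obtain ⟨⟨hFx, hTx⟩, huniq, -⟩ := h1
  refine ⟨certain_iff_forall_minModel.trans
    ⟨fun hcert => ?_, fun hG c hd => hG.minModel_satCQ hd⟩,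
    or_congr_left (exists_rule_one_iff_exists_cactus_hom hqfin hFx hTx)⟩
  by_contra hG
  obtain ⟨c, hd, hnsat⟩ := exists_minModel_not_satCQ hFx huniq hG
  exact hnsat (hcert c hd)

/-- Let `q` be a `1`-CQ with unique solitary `F`-node `x`, let
`O` be `cov_A` (`bot = false`) or `cov_A^⊥` (`bot = true`) and let `Π_Q` be the
datalog program with rules (1)–(3) and, for `cov_A^⊥` only, (4). Then for every
ABox `A` the following are equivalent: (i) `O, A ⊨ q`; (ii) `Π_Q, A ⊨ G`;
(iii) some cactus `C ∈ K_Q` maps homomorphically into `A`, or `O = cov_A^⊥` and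
`A` contains an `FT`-twin. -/
theorem statement_6 {σ α V : Type} [Infinite V]
    (q : Set (At σ V)) (x : V)
    (hqfin : q.Finite) (hqA : noA q) (hqconn : connCQ q)
    (h1 : isOneCQ q x)
    (bot : Bool) (A : Set (At σ α)) (hAfin : A.Finite) :
    ((if bot = true then covABotCert A q else covACert A q) ↔ GDer bot A q x) ∧
    (GDer bot A q x ↔
      ((∃ C : Set (At σ V), Cactus q x C ∧ ∃ h : V → α, ∀ b ∈ C, At.map h b ∈ A) ∨
        (bot = true ∧ ∃ a, At.F a ∈ A ∧ At.T a ∈ A))) :=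
  statement_6_general q x hqfin h1 bot A

end DS
end

section
/- Let ψ(x⃗, y⃗) be a 3CNF in which every clause contains each variable at most once, and let q_ψ and A_ψ be the CQ and ABox constructed from ψ as described in the context. For an assignment a : x⃗ → {F, T}, let A^a_ψ = A_ψ ∪ {T(a*_x) | a(x) = T, x ∈ x⃗} ∪ {F(a*_x) | a(x) = F, x ∈ x⃗}. Then there exists an assignment b : y⃗ → {F, T} making ψ(a(x⃗), b(y⃗)) true if and only if there is a homomorphism from q_ψ into A^a_ψ viewed as an interpretation. -/
/-! A satisfying assignment `b` gives a homomorphism: `z^c` goes to the centre whose triple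
picks `b^{b(y)}_y` at each `y`-position and, at each `x`-position, `a*_x` if the literal is
true under `asg` and the twin `a°_x` otherwise; condition (iii) holds because some literal of
`c` is true. Since each variable occurs at most once in `c`, the single query variable `x^c`
follows exactly one literal. Conversely, a homomorphism maps `z^c` to a centre of some triple
in `E^c`. The position witnessing (iii) lands either on `a*_x`, whose only label is the one chosen
by `asg`, so the `x`-literal is true, or on `b^ν_y` with `y = ν` making the literal true; hence
reading `b(y)` off the image of `y` satisfies `ψ`. -/

attribute [local instance] Classical.propDecidable

namespace DS

/-- A literal: a sign and a variable (universal `Fin xn` or existential `Fin yn`). -/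
abbrev Lit (xn yn : ℕ) : Type := Bool × (Fin xn ⊕ Fin yn)

/-- The variables of the CQ `q_ψ`: the clause variables `z^c`, the existential
variables `y`, and the fresh variables `x^c` (one per universal variable and
clause). -/
abbrev Vq (xn yn K : ℕ) : Type := Fin K ⊕ (Fin yn ⊕ (Fin xn × Fin K))

/-- The binary predicates `R_i^c` (one per clause and position). -/
abbrev Sg (K : ℕ) : Type := Fin K × Fin 3

/-- The individuals of the ABox `A_ψ`: `a*_x = (x, true)`, `a°_x = (x, false)`,
`b^T_y = (y, true)`, `b^F_y = (y, false)`, and the centres `d^c_{(e₁,e₂,e₃)}`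
(the triple being coded by a choice vector `Fin 3 → Bool`). -/
abbrev Ind (xn yn K : ℕ) : Type :=
  (Fin xn × Bool) ⊕ ((Fin yn × Bool) ⊕ (Fin K × (Fin 3 → Bool)))

/-- The variable `u_i^c` of `q_ψ` for position `z` of clause `c`. -/
def uVar {xn yn K : ℕ} (ψ : Fin K → Fin 3 → Lit xn yn) (c : Fin K) (z : Fin 3) :
    Vq xn yn K :=
  match (ψ c z).2 with
  | Sum.inl x => Sum.inr (Sum.inr (x, c))
  | Sum.inr y => Sum.inr (Sum.inl y)

/-- The CQ `q_ψ`: for each clause `c = ℓ₁ ∨ ℓ₂ ∨ ℓ₃`, the atoms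
`R_i^c(z^c, u_i^c)`, together with `T(x^c)` whenever `ℓ_i = x` and `F(x^c)`
whenever `ℓ_i = ¬x` for a universal variable `x`. -/
def qPsi {xn yn K : ℕ} (ψ : Fin K → Fin 3 → Lit xn yn) :
    Set (At (Sg K) (Vq xn yn K)) :=
  {a | ∃ c z, a = At.R (c, z) (Sum.inl c) (uVar ψ c z)} ∪
  {a | ∃ c z x, (ψ c z).2 = Sum.inl x ∧
        (((ψ c z).1 = true ∧ a = At.T (Sum.inr (Sum.inr (x, c)))) ∨
         ((ψ c z).1 = false ∧ a = At.F (Sum.inr (Sum.inr (x, c)))))}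

/-- Membership of a coded triple in `E^c`: condition (iii) of the construction
(some position is `a*_x`, or is `b^ν_y` with `y = ν` making the literal true). -/
def selOK {xn yn K : ℕ} (ψ : Fin K → Fin 3 → Lit xn yn) (c : Fin K)
    (v : Fin 3 → Bool) : Prop :=
  ∃ z : Fin 3, (∃ x, (ψ c z).2 = Sum.inl x ∧ v z = true) ∨
               (∃ y, (ψ c z).2 = Sum.inr y ∧ v z = (ψ c z).1)

/-- The individual `e_z` of the coded triple `v` at position `z` of clause `c`. -/
def eInd {xn yn K : ℕ} (ψ : Fin K → Fin 3 → Lit xn yn) (c : Fin K) (z : Fin 3)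
    (v : Fin 3 → Bool) : Ind xn yn K :=
  match (ψ c z).2 with
  | Sum.inl x => Sum.inl (x, v z)
  | Sum.inr y => Sum.inr (Sum.inl (y, v z))

/-- The ABox `A_ψ`: atoms `A(a*_x)`, `F(a°_x)`, `T(a°_x)` and, for each clause
`c` and each triple `(e₁,e₂,e₃) ∈ E^c`, a fresh centre `d` with atoms
`R_i^c(d, e_i)`. -/
def APsi {xn yn K : ℕ} (ψ : Fin K → Fin 3 → Lit xn yn) :
    Set (At (Sg K) (Ind xn yn K)) :=
  {a | ∃ x : Fin xn, a = At.A (Sum.inl (x, true))} ∪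
  {a | ∃ x : Fin xn, a = At.F (Sum.inl (x, false)) ∨ a = At.T (Sum.inl (x, false))} ∪
  {a | ∃ c v z, selOK ψ c v ∧
        a = At.R (c, z) (Sum.inr (Sum.inr (c, v))) (eInd ψ c z v)}

/-- `A^a_ψ = A_ψ ∪ {T(a*_x) | a(x) = T} ∪ {F(a*_x) | a(x) = F}`. -/
def APsiA {xn yn K : ℕ} (ψ : Fin K → Fin 3 → Lit xn yn) (asg : Fin xn → Bool) :
    Set (At (Sg K) (Ind xn yn K)) :=
  APsi ψ ∪
  {a | ∃ x : Fin xn, (asg x = true ∧ a = At.T (Sum.inl (x, true))) ∨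
        (asg x = false ∧ a = At.F (Sum.inl (x, true)))}

namespace At

def signed {σ α : Type} : Bool → α → At σ α
  | true, a => .T a
  | false, a => .F a

@[simp]
lemma map_signed {σ α β : Type} (h : α → β) (s : Bool) (a : α) :
    (signed s a : At σ α).map h = signed s (h a) := by
  cases s <;> rfl

end At

lemma toInterp_satCQ {σ α V : Type} (A : Set (At σ α)) (q : Set (At σ V)) :
    (toInterp A).satCQ q ↔ ∃ h : V → α, ∀ a ∈ q, a.map h ∈ A := by
  have satAt_iff : ∀ a, (toInterp A).satAt a ↔ a ∈ A := by
    intro a; cases a <;> rfl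
  simp only [Interp.satCQ, satAt_iff]

section Reduction

variable {xn yn K : ℕ} (ψ : Fin K → Fin 3 → Lit xn yn)

lemma uVar_of_inl {c : Fin K} {z : Fin 3} {x : Fin xn} (hx : (ψ c z).2 = Sum.inl x) :
    uVar ψ c z = Sum.inr (Sum.inr (x, c)) := by
  rw [uVar, hx]

lemma uVar_of_inr {c : Fin K} {z : Fin 3} {y : Fin yn} (hy : (ψ c z).2 = Sum.inr y) :
    uVar ψ c z = Sum.inr (Sum.inl y) := by
  rw [uVar, hy]

lemma eInd_of_inl {c : Fin K} {z : Fin 3} {x : Fin xn} (hx : (ψ c z).2 = Sum.inl x)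
    (v : Fin 3 → Bool) : eInd ψ c z v = Sum.inl (x, v z) := by
  rw [eInd, hx]

lemma eInd_of_inr {c : Fin K} {z : Fin 3} {y : Fin yn} (hy : (ψ c z).2 = Sum.inr y)
    (v : Fin 3 → Bool) : eInd ψ c z v = Sum.inr (Sum.inl (y, v z)) := by
  rw [eInd, hy]

lemma forall_mem_qPsi {P : At (Sg K) (Vq xn yn K) → Prop} :
    (∀ a ∈ qPsi ψ, P a) ↔
      (∀ c z, P (At.R (c, z) (Sum.inl c) (uVar ψ c z))) ∧
      ∀ c z x, (ψ c z).2 = Sum.inl x → P (At.signed (ψ c z).1 (Sum.inr (Sum.inr (x, c)))) := by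
  constructor
  · intro hP
    refine ⟨fun c z => hP _ (Or.inl ⟨c, z, rfl⟩), fun c z x hx => hP _ (Or.inr ⟨c, z, x, hx, ?_⟩)⟩
    cases (ψ c z).1 <;> simp [At.signed]
  · rintro ⟨hR, hlabel⟩ a (⟨c, z, rfl⟩ | ⟨c, z, x, hx, ⟨hs, rfl⟩ | ⟨hs, rfl⟩⟩)
    · exact hR c z
    · simpa [hs, At.signed] using hlabel c z x hx
    · simpa [hs, At.signed] using hlabel c z x hx

variable (asg : Fin xn → Bool)

lemma R_mem_APsiA_iff {c : Fin K} {z : Fin 3} {d e : Ind xn yn K} :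
    At.R (c, z) d e ∈ APsiA ψ asg ↔
      ∃ v, selOK ψ c v ∧ d = Sum.inr (Sum.inr (c, v)) ∧ e = eInd ψ c z v := by
  simp [APsiA, APsi]

/-- `a°_x` is an FT-twin, while `a*_x` carries only the label chosen by `asg`. -/
lemma signed_mem_APsiA_iff {s : Bool} {x : Fin xn} {star : Bool} :
    At.signed s (Sum.inl (x, star)) ∈ APsiA ψ asg ↔ (star = true → asg x = s) := by
  cases s <;> cases star <;> cases h : asg x <;> simp [APsiA, APsi, At.signed, h]

/-- The triple of `E^c` whose centre is the image of `z^c` under `homOfAssignment`. -/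
def centreChoice (b : Fin yn → Bool) (c : Fin K) (z : Fin 3) : Bool :=
  Sum.elim (fun x => decide (asg x = (ψ c z).1)) b (ψ c z).2

/-- `x^c` goes to `a*_x` if the literal of `x` in `c` is true and to the twin `a°_x` otherwise. -/
def homOfAssignment (b : Fin yn → Bool) : Vq xn yn K → Ind xn yn K :=
  Sum.elim (fun c => Sum.inr (Sum.inr (c, centreChoice ψ asg b c)))
    (Sum.elim (fun y => Sum.inr (Sum.inl (y, b y)))
      fun p => Sum.inl (p.1, decide (∃ z, (ψ p.2 z).2 = Sum.inl p.1 ∧ asg p.1 = (ψ p.2 z).1)))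

lemma selOK_centreChoice {b : Fin yn → Bool} {c : Fin K}
    (hc : ∃ z, Sum.elim asg b (ψ c z).2 = (ψ c z).1) : selOK ψ c (centreChoice ψ asg b c) := by
  obtain ⟨z, hz⟩ := hc
  refine ⟨z, ?_⟩
  rcases hx : (ψ c z).2 with x | y
  · exact Or.inl ⟨x, rfl, by simpa [centreChoice, hx] using hz⟩
  · exact Or.inr ⟨y, rfl, by simpa [centreChoice, hx] using hz⟩

lemma homOfAssignment_uVar
    (hdist : ∀ (c : Fin K) (z z' : Fin 3), z ≠ z' → (ψ c z).2 ≠ (ψ c z').2)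
    (b : Fin yn → Bool) (c : Fin K) (z : Fin 3) :
    homOfAssignment ψ asg b (uVar ψ c z) = eInd ψ c z (centreChoice ψ asg b c) := by
  rcases hx : (ψ c z).2 with x | y
  · have position_unique : ∀ z', (ψ c z').2 = Sum.inl x → z' = z := fun z' hz' =>
      by_contra fun hne => hdist c z' z hne (hz'.trans hx.symm)
    rw [uVar_of_inl ψ hx, eInd_of_inl ψ hx]
    simp only [homOfAssignment, centreChoice, hx, Sum.elim_inr, Sum.elim_inl]
    congr 2
    exact decide_eq_decide.2
      ⟨fun ⟨z', hz', hs⟩ => position_unique z' hz' ▸ hs, fun hs => ⟨z, hx, hs⟩⟩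
  · rw [uVar_of_inr ψ hx, eInd_of_inr ψ hx]
    simp [homOfAssignment, centreChoice, hx]

lemma satCQ_of_satisfiable
    (hdist : ∀ (c : Fin K) (z z' : Fin 3), z ≠ z' → (ψ c z).2 ≠ (ψ c z').2)
    {b : Fin yn → Bool} (hb : ∀ c, ∃ z, Sum.elim asg b (ψ c z).2 = (ψ c z).1) :
    (toInterp (APsiA ψ asg)).satCQ (qPsi ψ) := by
  rw [toInterp_satCQ]
  refine ⟨homOfAssignment ψ asg b, (forall_mem_qPsi ψ).2 ⟨fun c z => ?_, fun c z x hx => ?_⟩⟩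
  · exact (R_mem_APsiA_iff ψ asg).2
      ⟨_, selOK_centreChoice ψ asg (hb c), rfl, homOfAssignment_uVar ψ asg hdist b c z⟩
  · rw [At.map_signed, ← uVar_of_inl ψ hx, homOfAssignment_uVar ψ asg hdist,
      eInd_of_inl ψ hx, signed_mem_APsiA_iff]
    simp [centreChoice, hx]

lemma satisfiable_of_satCQ (hq : (toInterp (APsiA ψ asg)).satCQ (qPsi ψ)) :
    ∃ b : Fin yn → Bool, ∀ c, ∃ z, Sum.elim asg b (ψ c z).2 = (ψ c z).1 := by
  rw [toInterp_satCQ] at hq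
  obtain ⟨h, hhom⟩ := hq
  obtain ⟨hR, hlabel⟩ := (forall_mem_qPsi ψ).1 hhom
  simp only [At.map_signed] at hlabel
  refine ⟨fun y => Sum.elim (fun _ => false) (Sum.elim Prod.snd fun _ => false)
    (h (Sum.inr (Sum.inl y))), fun c => ?_⟩
  obtain ⟨v, ⟨z, hz⟩, hc, -⟩ := (R_mem_APsiA_iff ψ asg).1 (hR c 0)
  obtain ⟨v', -, hc', hu⟩ := (R_mem_APsiA_iff ψ asg).1 (hR c z)
  obtain rfl : v' = v := by simpa [hc] using hc'.symm
  refine ⟨z, ?_⟩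
  rcases hz with ⟨x, hx, hv⟩ | ⟨y, hy, hv⟩
  · rw [uVar_of_inl ψ hx, eInd_of_inl ψ hx, hv] at hu
    have hlit := (signed_mem_APsiA_iff ψ asg).1 (hu ▸ hlabel c z x hx) rfl
    simpa [hx] using hlit
  · rw [uVar_of_inr ψ hy, eInd_of_inr ψ hy] at hu
    simp [hy, hu, hv]

end Reduction

/-- Let `ψ` be a 3CNF in which every clause contains each
variable at most once and let `q_ψ`, `A_ψ` be the CQ and ABox constructed from
`ψ`.  For an assignment `a` to the universal variables, there exists an
assignment `b` to the existential variables making `ψ(a(x⃗), b(y⃗))` true if and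
only if there is a homomorphism from `q_ψ` into `A^a_ψ` viewed as an
interpretation. -/
theorem statement_14 {xn yn K : ℕ} (ψ : Fin K → Fin 3 → Lit xn yn)
    (hdist : ∀ (c : Fin K) (z z' : Fin 3), z ≠ z' → (ψ c z).2 ≠ (ψ c z').2)
    (asg : Fin xn → Bool) :
    (∃ b : Fin yn → Bool, ∀ c : Fin K, ∃ z : Fin 3,
        Sum.elim asg b (ψ c z).2 = (ψ c z).1) ↔
      (toInterp (APsiA ψ asg)).satCQ (qPsi ψ) :=
  ⟨fun ⟨_, hb⟩ => satCQ_of_satisfiable ψ asg hdist hb, satisfiable_of_satCQ ψ asg⟩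

end DS
end

section
/- Let q be a twinless path 2-CQ in which the first T-node t_1 precedes the first F-node f_1, and let W be an n-cogwheel for q with n ≥ |q| satisfying cogwheel conditions (i) and (ii). Then for every minimal model I of cov_A and W: I does not satisfy q if and only if either all contacts of W belong to the interpretation of T in I, or all contacts of W belong to the interpretation of F in I. -/
attribute [local instance] Classical.propDecidable

namespace DS

/-- The path CQ with `m` edges labelled `ρ 0, …, ρ (m-1)` along the nodes
`0, 1, …, m`, whose `F`-nodes are the elements of `FL` and whose `T`-nodes are
the elements of `TL`. -/
def pathCQ (σ : Type) (m : ℕ) (ρ : ℕ → σ) (FL TL : Set ℕ) : Set (At σ ℕ) :=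
  {a | (∃ i, i < m ∧ a = At.R (ρ i) i (i + 1)) ∨
       (∃ i ∈ FL, a = At.F i) ∨ (∃ i ∈ TL, a = At.T i)}
/-- Gluing normalisation for the nodes of an `n`-cogwheel: the chosen `T`-node
of copy `j` is glued to (identified with) the chosen `F`-node of copy `j - 1`. -/
def wheelNorm (n : ℕ) (cT cF : ZMod n → ℕ) (p : ZMod n × ℕ) : ZMod n × ℕ :=
  if p.2 = cT p.1 then (p.1 - 1, cF (p.1 - 1)) else p

/-- The copy of `q` used in a cogwheel: the labels `T`/`F` of the two chosen
contact nodes are replaced by `A`. -/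
def contactCopy {σ : Type} (q : Set (At σ ℕ)) (tpos fpos : ℕ) : Set (At σ ℕ) :=
  insert (At.A tpos) (insert (At.A fpos) (q \ {At.T tpos, At.F fpos}))

/-- The `n`-cogwheel for the path CQ `q` with contact choices `cT j ∈ TL`,
`cF j ∈ FL` (in the `j`-th copy of `q`): the `n` copies are arranged in a cycle,
gluing the `F`-contact of copy `j` to the `T`-contact of copy `j + 1`. -/
def cogwheel (σ : Type) (n : ℕ) (q : Set (At σ ℕ)) (cT cF : ZMod n → ℕ) :
    Set (At σ (ZMod n × ℕ)) :=
  {a | ∃ j : ZMod n, ∃ b ∈ contactCopy q (cT j) (cF j),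
        a = At.map (fun v => wheelNorm n cT cF (j, v)) b}

/-- The contact-distance between the contacts with indices `a` and `b`. -/
def cdist {n : ℕ} (a b : ZMod n) : ℕ := min (ZMod.val (a - b)) (ZMod.val (b - a))

/-!
A homomorphism of the path `q` into the cogwheel is a walk: node `i` sits at position `Q i`
of copy `K i`, and each step either continues inside its copy or passes through a contact into
a neighbouring copy. A backward jump raises the position by condition (ii) and can be neither
preceded nor followed by another jump, so the last node would lie beyond position `m`.

If all contacts are `T`, every `F`-node of `q` must sit at a non-contact `F`-position. Then the
position `g = entryPos Q` through which a node is entered maps `[0, m]` into itself, commutes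
with `+ 1` except at the nodes where a jump lands, and maps `F`-positions and landings to
`F`-positions. Shifting a periodic orbit of `g` that avoids the landings gives a periodic orbit
one step higher, which cannot go on up to `m`; so some landing is periodic and hence an
`F`-position, while it sits on a `T`-contact. If all contacts are `F`, the same argument runs
downwards with `Q` in place of `g`. Conversely, if some `T`-contact is followed by an `F`-contact, `q` maps
identically onto the copy between them.
-/

open Function Set

theorem exists_mem_periodicPts_of_mapsTo {α : Type*} {g : α → α} {D : Set α}
    (hD : D.Finite) (hne : D.Nonempty) (hg : MapsTo g D D) : ∃ x ∈ D, x ∈ periodicPts g := by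
  obtain ⟨x, hx⟩ := hne
  obtain ⟨a, b, hab, heq⟩ :=
    Finite.exists_lt_map_eq_of_forall_mem (f := fun k => g^[k] x) (fun k => hg.iterate k hx) hD
  refine ⟨g^[a] x, hg.iterate a hx, b - a, by omega, ?_⟩
  rw [IsPeriodicPt, IsFixedPt, ← iterate_add_apply, Nat.sub_add_cancel hab.le, heq]

theorem mem_of_mem_periodicPts {α : Type*} {g : α → α} {P : Set α} (hP : MapsTo g P P) {u : α}
    (hu : u ∈ periodicPts g) (hgu : g u ∈ P) : u ∈ P := by
  obtain ⟨p, hp, hper⟩ := hu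
  rw [← hper.eq, ← Nat.sub_add_cancel hp, iterate_succ_apply]
  exact hP.iterate _ hgu

/-- Think of `σ` as a successor on `D` leading to the end point `e`. If no point of `M` were
periodic, `σ` would map periodic orbits to periodic orbits, and iterating would make `e`
periodic; but `e` has no preimage outside `M`. -/
theorem exists_mem_periodicPts_of_commute_off {α : Type*} {g σ : α → α} {D M : Set α} {e : α}
    (hD : D.Finite) (hne : D.Nonempty) (hg : MapsTo g D D) (hσ : MapsTo σ (D \ {e}) D)
    (hreach : ∀ x ∈ D, ∃ k, σ^[k] x = e)
    (hcomm : ∀ x ∈ D, x ≠ e → x ∉ M → g (σ x) = σ (g x))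
    (hmiss : ∀ x ∈ D, x ∉ M → g x ≠ e) :
    ∃ u ∈ M, u ∈ periodicPts g := by
  by_contra! hM
  set P := D ∩ periodicPts g
  have hP : MapsTo g P P := fun x hx => ⟨hg hx.1, (bijOn_periodicPts g).mapsTo hx.2⟩
  have heP : e ∉ P := by
    rintro ⟨heD, p, hp, hper⟩
    have hz : g^[p - 1] e ∈ P := hP.iterate _ ⟨heD, p, hp, hper⟩
    refine hmiss _ hz.1 (fun hzM => hM _ hzM hz.2) ?_
    rw [← iterate_succ_apply' g, Nat.succ_eq_add_one, Nat.sub_add_cancel hp, hper.eq]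
  have hσP : MapsTo σ P P := by
    rintro x ⟨hxD, p, hp, hper⟩
    have horb : ∀ i, g^[i] x ∈ P := fun i => hP.iterate i ⟨hxD, p, hp, hper⟩
    have hshift : ∀ i, g^[i] (σ x) = σ (g^[i] x) := by
      intro i
      induction i with
      | zero => rfl
      | succ i ih =>
        rw [iterate_succ_apply', iterate_succ_apply', ih]
        exact hcomm _ (horb i).1 (fun h => heP (h ▸ horb i)) (fun h => hM _ h (horb i).2)
    refine ⟨hσ ⟨hxD, fun h => heP (h ▸ ⟨hxD, p, hp, hper⟩)⟩, p, hp, ?_⟩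
    rw [IsPeriodicPt, IsFixedPt, hshift, hper.eq]
  obtain ⟨x, hxD, hx⟩ := exists_mem_periodicPts_of_mapsTo hD hne hg
  obtain ⟨k, hk⟩ := hreach x hxD
  exact heP (hk ▸ hσP.iterate k ⟨hxD, hx⟩)

theorem ZMod.exists_not_and_add_one {n : ℕ} [NeZero n] {P : ZMod n → Prop} (h1 : ∃ j, P j)
    (h0 : ∃ j, ¬ P j) : ∃ j, ¬ P j ∧ P (j + 1) := by
  by_contra! hstep
  obtain ⟨j1, hj1⟩ := h1
  obtain ⟨j0, hj0⟩ := h0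
  have hall : ∀ k : ℕ, ¬ P (j0 + k) := by
    intro k
    induction k with
    | zero => simpa using hj0
    | succ k ih => simpa [add_assoc] using hstep _ ih
  apply hall (j1 - j0).val
  simpa using hj1

section Walk

variable {n m : ℕ} {cT cF : ZMod n → ℕ} {K : ℕ → ZMod n} {Q : ℕ → ℕ}

def IsInnerStep (K : ℕ → ZMod n) (Q : ℕ → ℕ) (i : ℕ) : Prop :=
  K (i + 1) = K i ∧ Q (i + 1) = Q i + 1

def IsForwardJump (cT cF : ZMod n → ℕ) (K : ℕ → ZMod n) (Q : ℕ → ℕ) (i : ℕ) : Prop :=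
  K (i + 1) = K i + 1 ∧ Q i + 1 = cF (K i) ∧ Q (i + 1) = cT (K (i + 1))

def IsBackwardJump (cT cF : ZMod n → ℕ) (K : ℕ → ZMod n) (Q : ℕ → ℕ) (i : ℕ) : Prop :=
  K (i + 1) = K i - 1 ∧ Q i + 1 = cT (K i) ∧ Q (i + 1) = cF (K (i + 1))

/-- Node `i < m` of a path of length `m` sits at position `Q i` of copy `K i`, and its outgoing
edge runs from `Q i` to `Q i + 1` inside that copy; the last node `m` is recorded at the end of
the last edge. -/
structure IsWalk (m : ℕ) (cT cF : ZMod n → ℕ) (K : ℕ → ZMod n) (Q : ℕ → ℕ) : Prop where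
  lt : ∀ i < m, Q i < m
  last_le : Q m ≤ m
  step : ∀ i < m,
    IsInnerStep K Q i ∨ IsForwardJump cT cF K Q i ∨ IsBackwardJump cT cF K Q i

namespace IsWalk

theorem le (hw : IsWalk m cT cF K Q) {i : ℕ} (hi : i ≤ m) : Q i ≤ m := by
  rcases hi.lt_or_eq with hi | rfl
  · exact (hw.lt i hi).le
  · exact hw.last_le

theorem add_eq_of_lt_cT (hw : IsWalk m cT cF K Q) (hc1 : ∀ j, cT j < cF j) {i : ℕ}
    (hi : i ≤ m) (h : Q i < cT (K i)) : Q 0 + i = Q i := by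
  suffices key : ∀ d ≤ i, K (i - d) = K i ∧ Q (i - d) + d = Q i by
    simpa using (key i le_rfl).2
  intro d
  induction d with
  | zero => simp
  | succ d ih =>
    intro hd
    obtain ⟨hK, hQ⟩ := ih (by omega)
    have hs : i - (d + 1) + 1 = i - d := by omega
    rcases hw.step (i - (d + 1)) (by omega) with ⟨h1, h2⟩ | ⟨-, -, h3⟩ | ⟨-, -, h3⟩
    · rw [hs] at h1 h2
      exact ⟨h1.symm.trans hK, by omega⟩
    · rw [hs, hK] at h3
      omega
    · rw [hs, hK] at h3
      have := hc1 (K i)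
      omega

theorem last_eq_of_cF_le (hw : IsWalk m cT cF K Q) (hc1 : ∀ j, cT j < cF j) {i : ℕ}
    (hi : i ≤ m) (h : cF (K i) ≤ Q i) : Q m = Q i + (m - i) := by
  suffices key : ∀ d, i + d ≤ m → K (i + d) = K i ∧ Q (i + d) = Q i + d by
    simpa [Nat.add_sub_cancel' hi] using (key (m - i) (by omega)).2
  intro d
  induction d with
  | zero => simp
  | succ d ih =>
    intro hd
    obtain ⟨hK, hQ⟩ := ih (by omega)
    rw [← add_assoc]
    rcases hw.step (i + d) (by omega) with ⟨h1, h2⟩ | ⟨-, h2, -⟩ | ⟨-, h2, -⟩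
    · exact ⟨h1.trans hK, by omega⟩
    · rw [hK] at h2
      omega
    · rw [hK] at h2
      have := hc1 (K i)
      omega

theorem not_isBackwardJump (hw : IsWalk m cT cF K Q) (hc1 : ∀ j, cT j < cF j)
    (hc2 : ∀ j, cT (j + 1) < cF j) {i : ℕ} (hi : i < m) : ¬ IsBackwardJump cT cF K Q i := by
  rintro ⟨hK, hleave, hland⟩
  have hbefore := hw.add_eq_of_lt_cT hc1 hi.le (by omega)
  have hafter := hw.last_eq_of_cF_le hc1 (i := i + 1) hi (by omega)
  have hjump := hc2 (K (i + 1))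
  rw [hK, sub_add_cancel] at hjump
  rw [hK] at hland
  have := hw.last_le
  omega

end IsWalk

def IsForwardWalk (m : ℕ) (cT cF : ZMod n → ℕ) (K : ℕ → ZMod n) (Q : ℕ → ℕ) : Prop :=
  ∀ i < m, IsInnerStep K Q i ∨ IsForwardJump cT cF K Q i

theorem IsWalk.isForwardWalk (hw : IsWalk m cT cF K Q) (hc1 : ∀ j, cT j < cF j)
    (hc2 : ∀ j, cT (j + 1) < cF j) : IsForwardWalk m cT cF K Q := fun i hi =>
  (hw.step i hi).imp_right (Or.resolve_right · (hw.not_isBackwardJump hc1 hc2 hi))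

namespace IsForwardWalk

theorem eq_of_fixed_of_cT_lt (hf : IsForwardWalk m cT cF K Q) {x y : ℕ} (hxm : x ≤ m)
    (hx : Q x = x) (hy : cT (K x) < y) (hyx : y ≤ x) : K y = K x ∧ Q y = y := by
  induction hyx using Nat.decreasingInduction with
  | self => exact ⟨rfl, hx⟩
  | of_succ y hyx ih =>
    obtain ⟨hK, hQ⟩ := ih (by omega)
    rcases hf y (by omega) with ⟨h1, h2⟩ | ⟨-, -, h3⟩
    · exact ⟨h1.symm.trans hK, by omega⟩
    · rw [hK] at h3
      omega

theorem eq_of_fixed_of_lt_cF (hf : IsForwardWalk m cT cF K Q) {x y : ℕ} (hx : Q x = x)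
    (hxy : x ≤ y) (hy : y < cF (K x)) (hym : y ≤ m) : K y = K x ∧ Q y = y := by
  induction y, hxy using Nat.le_induction with
  | base => exact ⟨rfl, hx⟩
  | succ y hxy ih =>
    obtain ⟨hK, hQ⟩ := ih (by omega) (by omega)
    rcases hf y (by omega) with ⟨h1, h2⟩ | ⟨-, h2, -⟩
    · exact ⟨h1.trans hK, by omega⟩
    · rw [hK] at h2
      omega

end IsForwardWalk

def landings (m : ℕ) (cT cF : ZMod n → ℕ) (K : ℕ → ZMod n) (Q : ℕ → ℕ) : Set ℕ :=
  {u | ∃ i < m, IsForwardJump cT cF K Q i ∧ i + 1 = u}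

theorem eq_cT_of_mem_landings {u : ℕ} (hu : u ∈ landings m cT cF K Q) : Q u = cT (K u) := by
  obtain ⟨i, -, ⟨-, -, h⟩, rfl⟩ := hu
  exact h

theorem IsForwardWalk.succ_of_not_mem_landings (hf : IsForwardWalk m cT cF K Q) {i : ℕ}
    (hi : i < m) (hL : i + 1 ∉ landings m cT cF K Q) : Q (i + 1) = Q i + 1 :=
  ((hf i hi).resolve_right fun hj => hL ⟨i, hi, hj, rfl⟩).2

def entryPos (Q : ℕ → ℕ) : ℕ → ℕ
  | 0 => Q 0
  | i + 1 => Q i + 1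

theorem IsForwardWalk.entryPos_eq (hf : IsForwardWalk m cT cF K Q) {x : ℕ} (hx : x ≤ m)
    (hL : x ∉ landings m cT cF K Q) : entryPos Q x = Q x := by
  cases x with
  | zero => rfl
  | succ i => exact (hf.succ_of_not_mem_landings hx hL).symm

theorem IsWalk.false_of_F_nodes (hw : IsWalk m cT cF K Q) (hc1 : ∀ j, cT j < cF j)
    (hc2 : ∀ j, cT (j + 1) < cF j) {FL : Set ℕ} (hFL : FL ⊆ Iic m) (hcF : ∀ j, cF j ∈ FL)
    (hcT : ∀ j, cT j ∉ FL) (hF : ∀ f ∈ FL, Q f ∈ FL ∧ Q f ≠ cF (K f)) : False := by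
  have hf := hw.isForwardWalk hc1 hc2
  have hLF : ∀ u ∈ landings m cT cF K Q, u ∉ FL := fun u hu huF =>
    hcT _ (eq_cT_of_mem_landings hu ▸ (hF u huF).1)
  have hfix : Q m ≠ m := fun hm => by
    obtain ⟨hK, hQ⟩ := hf.eq_of_fixed_of_cT_lt le_rfl hm (hc1 (K m)) (hFL (hcF (K m)))
    exact (hF _ (hcF (K m))).2 (by rw [hQ, hK])
  obtain ⟨u, huL, hu⟩ : ∃ u ∈ landings m cT cF K Q, u ∈ periodicPts (entryPos Q) := by
    refine exists_mem_periodicPts_of_commute_off (σ := Nat.succ) (e := m) (finite_Iic m)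
      nonempty_Iic (fun x hx => ?_) (fun x hx => ?_) (fun x hx => ?_) (fun x hx hxm hL => ?_)
      (fun x hx hL => ?_)
    · cases x with
      | zero => exact hw.le hx
      | succ i => exact hw.lt i hx
    · exact Nat.succ_le_of_lt (lt_of_le_of_ne hx.1 hx.2)
    · exact ⟨m - x, by rw [Nat.succ_iterate, Nat.add_sub_cancel' hx]⟩
    · rw [hf.entryPos_eq hx hL]
      rfl
    · rw [hf.entryPos_eq hx hL]
      rcases (mem_Iic.mp hx).lt_or_eq with hx | rfl
      · exact (hw.lt x hx).ne
      · exact hfix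
  refine hLF u huL (mem_of_mem_periodicPts (fun f hf' => ?_) hu ?_)
  · rw [hf.entryPos_eq (hFL hf') fun h => hLF f h hf']
    exact (hF f hf').1
  · obtain ⟨i, -, ⟨-, h, -⟩, rfl⟩ := huL
    show Q i + 1 ∈ FL
    rw [h]
    exact hcF _

theorem IsWalk.false_of_T_nodes (hw : IsWalk m cT cF K Q) (hc1 : ∀ j, cT j < cF j)
    (hc2 : ∀ j, cT (j + 1) < cF j) {TL : Set ℕ} (hTL : TL ⊆ Iic m) (hcT : ∀ j, cT j ∈ TL)
    (hT : ∀ t ∈ TL, Q t ∈ TL ∧ Q t ≠ cT (K t)) : False := by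
  have hf := hw.isForwardWalk hc1 hc2
  have hLT : ∀ u ∈ landings m cT cF K Q, u ∉ TL := fun u hu huT =>
    (hT u huT).2 (eq_cT_of_mem_landings hu)
  have hfix : Q 0 ≠ 0 := fun h0 => by
    obtain ⟨hK, hQ⟩ := hf.eq_of_fixed_of_lt_cF h0 (Nat.zero_le _) (hc1 (K 0)) (hTL (hcT (K 0)))
    exact (hT _ (hcT (K 0))).2 (by rw [hQ, hK])
  obtain ⟨u, huL, hu⟩ : ∃ u ∈ landings m cT cF K Q, u ∈ periodicPts Q := by
    refine exists_mem_periodicPts_of_commute_off (σ := Nat.pred) (e := 0) (finite_Iic m)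
      nonempty_Iic (fun x hx => hw.le hx) (fun x hx => ?_) (fun x hx => ?_)
      (fun x hx hx0 hL => ?_) (fun x hx hL => ?_)
    · exact (Nat.pred_le x).trans hx.1
    · exact ⟨x, by rw [Nat.pred_iterate, Nat.sub_self]⟩
    · obtain ⟨i, rfl⟩ := Nat.exists_eq_succ_of_ne_zero hx0
      rw [hf.succ_of_not_mem_landings hx hL]
      rfl
    · cases x with
      | zero => exact hfix
      | succ i =>
        rw [hf.succ_of_not_mem_landings hx hL]
        exact Nat.succ_ne_zero _
  refine hLT u huL (mem_of_mem_periodicPts (fun t ht => (hT t ht).1) hu ?_)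
  rw [eq_cT_of_mem_landings huL]
  exact hcT _

end Walk

section Cogwheel

variable {σ : Type} {m n : ℕ} {ρ : ℕ → σ} {FL TL : Set ℕ} {cT cF : ZMod n → ℕ}

lemma wheelNorm_of_ne {j : ZMod n} {p : ℕ} (h : p ≠ cT j) : wheelNorm n cT cF (j, p) = (j, p) :=
  if_neg h

lemma wheelNorm_cT (j : ZMod n) : wheelNorm n cT cF (j, cT j) = (j - 1, cF (j - 1)) :=
  if_pos rfl

lemma wheelNorm_eq_wheelNorm {k k' : ZMod n} {p p' : ℕ}
    (h : wheelNorm n cT cF (k, p) = wheelNorm n cT cF (k', p')) :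
    (k' = k ∧ p' = p) ∨ (k' = k + 1 ∧ p = cF k ∧ p' = cT k') ∨
      (k' = k - 1 ∧ p = cT k ∧ p' = cF k') := by
  by_cases hp : p = cT k <;> by_cases hp' : p' = cT k'
  · subst hp hp'
    rw [wheelNorm_cT, wheelNorm_cT, Prod.mk.injEq, sub_left_inj] at h
    exact Or.inl ⟨h.1.symm, by rw [h.1]⟩
  · rw [hp, wheelNorm_cT, wheelNorm_of_ne hp', Prod.mk.injEq] at h
    exact Or.inr (Or.inr ⟨h.1.symm, hp, h.1 ▸ h.2.symm⟩)
  · rw [hp', wheelNorm_cT, wheelNorm_of_ne hp, Prod.mk.injEq] at h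
    exact Or.inr (Or.inl ⟨by rw [h.1, sub_add_cancel], h.1 ▸ h.2, hp'⟩)
  · rw [wheelNorm_of_ne hp, wheelNorm_of_ne hp', Prod.mk.injEq] at h
    exact Or.inl ⟨h.1.symm, h.2.symm⟩

lemma mem_cogwheel_pathCQ {a : At σ (ZMod n × ℕ)} :
    a ∈ cogwheel σ n (pathCQ σ m ρ FL TL) cT cF ↔ ∃ j : ZMod n,
      a = At.A (wheelNorm n cT cF (j, cT j)) ∨ a = At.A (wheelNorm n cT cF (j, cF j)) ∨
      (∃ i < m, a = At.R (ρ i) (wheelNorm n cT cF (j, i)) (wheelNorm n cT cF (j, i + 1))) ∨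
      (∃ f ∈ FL, f ≠ cF j ∧ a = At.F (wheelNorm n cT cF (j, f))) ∨
      (∃ t ∈ TL, t ≠ cT j ∧ a = At.T (wheelNorm n cT cF (j, t))) := by
  simp only [cogwheel, contactCopy, pathCQ, Set.mem_ofPred_eq, Set.mem_insert_iff, Set.mem_sdiff]
  refine exists_congr fun j => ⟨?_, ?_⟩
  · rintro ⟨b, hb, rfl⟩
    rcases hb with rfl | rfl | ⟨⟨i, hi, rfl⟩ | ⟨f, hf, rfl⟩ | ⟨t, ht, rfl⟩, hne⟩
    · exact Or.inl rfl
    · exact Or.inr (Or.inl rfl)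
    · exact Or.inr (Or.inr (Or.inl ⟨i, hi, rfl⟩))
    · exact Or.inr (Or.inr (Or.inr (Or.inl ⟨f, hf, by rintro rfl; simp at hne, rfl⟩)))
    · exact Or.inr (Or.inr (Or.inr (Or.inr ⟨t, ht, by rintro rfl; simp at hne, rfl⟩)))
  · rintro (h | h | ⟨i, hi, h⟩ | ⟨f, hf, hne, h⟩ | ⟨t, ht, hne, h⟩) <;> subst h
    · exact ⟨_, Or.inl rfl, rfl⟩
    · exact ⟨_, Or.inr (Or.inl rfl), rfl⟩
    · exact ⟨_, Or.inr (Or.inr ⟨Or.inl ⟨i, hi, rfl⟩, by simp⟩), rfl⟩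
    · exact ⟨_, Or.inr (Or.inr ⟨Or.inr (Or.inl ⟨f, hf, rfl⟩), by simp [hne]⟩), rfl⟩
    · exact ⟨_, Or.inr (Or.inr ⟨Or.inr (Or.inr ⟨t, ht, rfl⟩), by simp [hne]⟩), rfl⟩

lemma F_mem_cogwheel {u : ZMod n × ℕ} (hdisj : ∀ i, ¬ (i ∈ FL ∧ i ∈ TL)) (hcT : ∀ j, cT j ∈ TL) :
    At.F u ∈ cogwheel σ n (pathCQ σ m ρ FL TL) cT cF ↔ u.2 ∈ FL ∧ u.2 ≠ cF u.1 := by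
  have hν : ∀ j, ∀ f ∈ FL, wheelNorm n cT cF (j, f) = (j, f) := fun j f hf =>
    wheelNorm_of_ne fun h => hdisj f ⟨hf, h ▸ hcT j⟩
  simp only [mem_cogwheel_pathCQ, reduceCtorEq, and_false, exists_false, or_false, false_or,
    At.F.injEq]
  constructor
  · rintro ⟨j, f, hf, hne, rfl⟩
    rw [hν j f hf]
    exact ⟨hf, hne⟩
  · rintro ⟨hf, hne⟩
    exact ⟨u.1, u.2, hf, hne, (hν _ _ hf).symm⟩

lemma T_mem_cogwheel {u : ZMod n × ℕ} :
    At.T u ∈ cogwheel σ n (pathCQ σ m ρ FL TL) cT cF ↔ u.2 ∈ TL ∧ u.2 ≠ cT u.1 := by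
  simp only [mem_cogwheel_pathCQ, reduceCtorEq, and_false, exists_false, false_or, At.T.injEq]
  constructor
  · rintro ⟨j, t, ht, hne, rfl⟩
    rw [wheelNorm_of_ne hne]
    exact ⟨ht, hne⟩
  · rintro ⟨ht, hne⟩
    exact ⟨u.1, u.2, ht, hne, (wheelNorm_of_ne hne).symm⟩

lemma A_mem_cogwheel {u : ZMod n × ℕ} (hne : ∀ j, cF j ≠ cT j) :
    At.A u ∈ cogwheel σ n (pathCQ σ m ρ FL TL) cT cF ↔ u.2 = cF u.1 := by
  simp only [mem_cogwheel_pathCQ, reduceCtorEq, and_false, exists_false, or_false, At.A.injEq,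
    wheelNorm_cT, wheelNorm_of_ne (hne _)]
  constructor
  · rintro ⟨j, rfl | rfl⟩ <;> rfl
  · intro h
    exact ⟨u.1, Or.inr (Prod.ext rfl h)⟩

lemma R_mem_cogwheel {r : σ} {u v : ZMod n × ℕ} :
    At.R r u v ∈ cogwheel σ n (pathCQ σ m ρ FL TL) cT cF ↔ ∃ j : ZMod n, ∃ i < m,
      r = ρ i ∧ u = wheelNorm n cT cF (j, i) ∧ v = wheelNorm n cT cF (j, i + 1) := by
  simp [mem_cogwheel_pathCQ]

lemma undecided_cogwheel_iff {u : ZMod n × ℕ} (hdisj : ∀ i, ¬ (i ∈ FL ∧ i ∈ TL))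
    (hcT : ∀ j, cT j ∈ TL) (hcF : ∀ j, cF j ∈ FL) :
    undecided (cogwheel σ n (pathCQ σ m ρ FL TL) cT cF) u ↔ u.2 = cF u.1 := by
  have hne : ∀ j, cF j ≠ cT j := fun j h => hdisj _ ⟨hcF j, h ▸ hcT j⟩
  simp only [undecided, A_mem_cogwheel hne, F_mem_cogwheel hdisj hcT, T_mem_cogwheel]
  constructor
  · exact fun h => h.1
  · intro h
    refine ⟨h, fun hF => hF.2 h, fun hT => hdisj _ ⟨?_, hT.1⟩⟩
    rw [h]
    exact hcF _

variable {c : ZMod n × ℕ → Bool}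

lemma minModel_FS_iff {u : ZMod n × ℕ} (hdisj : ∀ i, ¬ (i ∈ FL ∧ i ∈ TL))
    (hcT : ∀ j, cT j ∈ TL) (hcF : ∀ j, cF j ∈ FL) :
    (minModel (cogwheel σ n (pathCQ σ m ρ FL TL) cT cF) c).FS u ↔
      (u.2 ∈ FL ∧ u.2 ≠ cF u.1) ∨ (u.2 = cF u.1 ∧ c u = true) := by
  simp only [minModel, F_mem_cogwheel hdisj hcT, undecided_cogwheel_iff hdisj hcT hcF]

lemma minModel_TS_iff {u : ZMod n × ℕ} (hdisj : ∀ i, ¬ (i ∈ FL ∧ i ∈ TL))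
    (hcT : ∀ j, cT j ∈ TL) (hcF : ∀ j, cF j ∈ FL) :
    (minModel (cogwheel σ n (pathCQ σ m ρ FL TL) cT cF) c).TS u ↔
      (u.2 ∈ TL ∧ u.2 ≠ cT u.1) ∨ (u.2 = cF u.1 ∧ c u = false) := by
  simp only [minModel, T_mem_cogwheel, undecided_cogwheel_iff hdisj hcT hcF]

theorem exists_walk_of_mem_cogwheel (hm : 0 < m) {h : ℕ → ZMod n × ℕ}
    (hR : ∀ i < m, At.R (ρ i) (h i) (h (i + 1)) ∈ cogwheel σ n (pathCQ σ m ρ FL TL) cT cF) :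
    ∃ K Q, IsWalk m cT cF K Q ∧ ∀ i ≤ m, h i = wheelNorm n cT cF (K i, Q i) := by
  have hedge : ∀ i, ∃ e : ZMod n × ℕ, i < m →
      e.2 < m ∧ h i = wheelNorm n cT cF e ∧ h (i + 1) = wheelNorm n cT cF (e.1, e.2 + 1) := by
    intro i
    by_cases hi : i < m
    · obtain ⟨j, p, hp, -, h1, h2⟩ := R_mem_cogwheel.mp (hR i hi)
      exact ⟨(j, p), fun _ => ⟨hp, h1, h2⟩⟩
    · exact ⟨(0, 0), fun h => absurd h hi⟩
  choose e he using hedge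
  refine ⟨fun i => if i < m then (e i).1 else (e (m - 1)).1,
    fun i => if i < m then (e i).2 else (e (m - 1)).2 + 1, ⟨?_, ?_, ?_⟩, ?_⟩
  · intro i hi
    simpa [hi] using (he i hi).1
  · simpa using (he (m - 1) (by omega)).1
  · intro i hi
    simp only [IsInnerStep, IsForwardJump, IsBackwardJump, if_pos hi]
    rcases (show i + 1 < m ∨ i + 1 = m by omega) with hi1 | hi1
    · simp only [if_pos hi1]
      exact wheelNorm_eq_wheelNorm ((he i hi).2.2.symm.trans (he (i + 1) hi1).2.1)
    · subst hi1
      left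
      simp
  · intro i hi
    rcases hi.lt_or_eq with hi | rfl
    · simpa [hi] using (he i hi).2.1
    · have h' := (he (i - 1) (by omega)).2.2
      rw [Nat.sub_add_cancel hm] at h'
      simpa using h'

lemma minModel_FS_contact_iff (hdisj : ∀ i, ¬ (i ∈ FL ∧ i ∈ TL)) (hcT : ∀ j, cT j ∈ TL)
    (hcF : ∀ j, cF j ∈ FL) (j : ZMod n) :
    (minModel (cogwheel σ n (pathCQ σ m ρ FL TL) cT cF) c).FS (j, cF j) ↔ c (j, cF j) = true := by
  simp [minModel_FS_iff hdisj hcT hcF]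

lemma minModel_TS_contact_iff (hdisj : ∀ i, ¬ (i ∈ FL ∧ i ∈ TL)) (hcT : ∀ j, cT j ∈ TL)
    (hcF : ∀ j, cF j ∈ FL) (j : ZMod n) :
    (minModel (cogwheel σ n (pathCQ σ m ρ FL TL) cT cF) c).TS (j, cF j) ↔ c (j, cF j) = false := by
  have hj : cF j ∉ TL := fun h => hdisj _ ⟨hcF j, h⟩
  simp [minModel_TS_iff hdisj hcT hcF, hj]

lemma FS_wheelNorm_of_contacts_T (hdisj : ∀ i, ¬ (i ∈ FL ∧ i ∈ TL)) (hcT : ∀ j, cT j ∈ TL)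
    (hcF : ∀ j, cF j ∈ FL) (hT : ∀ j, c (j, cF j) = false) {k : ZMod n} {p : ℕ}
    (h : (minModel (cogwheel σ n (pathCQ σ m ρ FL TL) cT cF) c).FS (wheelNorm n cT cF (k, p))) :
    p ∈ FL ∧ p ≠ cF k := by
  by_cases hp : p = cT k
  · subst hp
    rw [wheelNorm_cT, minModel_FS_iff hdisj hcT hcF] at h
    simp [hT] at h
  · rw [wheelNorm_of_ne hp, minModel_FS_iff hdisj hcT hcF] at h
    refine h.resolve_right ?_
    rintro ⟨hpc, h⟩
    simp [show p = cF k from hpc, hT] at h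

lemma TS_wheelNorm_of_contacts_F (hdisj : ∀ i, ¬ (i ∈ FL ∧ i ∈ TL)) (hcT : ∀ j, cT j ∈ TL)
    (hcF : ∀ j, cF j ∈ FL) (hF : ∀ j, c (j, cF j) = true) {k : ZMod n} {p : ℕ}
    (h : (minModel (cogwheel σ n (pathCQ σ m ρ FL TL) cT cF) c).TS (wheelNorm n cT cF (k, p))) :
    p ∈ TL ∧ p ≠ cT k := by
  by_cases hp : p = cT k
  · subst hp
    rw [wheelNorm_cT, minModel_TS_iff hdisj hcT hcF] at h
    simp [hF] at h
    exact (hdisj _ ⟨hcF _, h.1⟩).elim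
  · rw [wheelNorm_of_ne hp, minModel_TS_iff hdisj hcT hcF] at h
    refine h.resolve_right ?_
    rintro ⟨hpc, h⟩
    simp [show p = cF k from hpc, hF] at h

theorem not_satCQ_of_contacts_T (hm : 0 < m) (hFL : FL ⊆ Iic m)
    (hdisj : ∀ i, ¬ (i ∈ FL ∧ i ∈ TL)) (hcT : ∀ j, cT j ∈ TL) (hcF : ∀ j, cF j ∈ FL)
    (hc1 : ∀ j, cT j < cF j) (hc2 : ∀ j, cT (j + 1) < cF j) (hT : ∀ j, c (j, cF j) = false) :
    ¬ (minModel (cogwheel σ n (pathCQ σ m ρ FL TL) cT cF) c).satCQ (pathCQ σ m ρ FL TL) := by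
  rintro ⟨h, hh⟩
  obtain ⟨K, Q, hw, hKQ⟩ := exists_walk_of_mem_cogwheel hm fun i hi =>
    hh (At.R (ρ i) i (i + 1)) (Or.inl ⟨i, hi, rfl⟩)
  refine hw.false_of_F_nodes hc1 hc2 hFL hcF (fun j hj => hdisj _ ⟨hj, hcT j⟩) fun f hf => ?_
  have hFS := hh (At.F f) (Or.inr (Or.inl ⟨f, hf, rfl⟩))
  rw [At.map, Interp.satAt, hKQ f (hFL hf)] at hFS
  exact FS_wheelNorm_of_contacts_T hdisj hcT hcF hT hFS

theorem not_satCQ_of_contacts_F (hm : 0 < m) (hTL : TL ⊆ Iic m)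
    (hdisj : ∀ i, ¬ (i ∈ FL ∧ i ∈ TL)) (hcT : ∀ j, cT j ∈ TL) (hcF : ∀ j, cF j ∈ FL)
    (hc1 : ∀ j, cT j < cF j) (hc2 : ∀ j, cT (j + 1) < cF j) (hF : ∀ j, c (j, cF j) = true) :
    ¬ (minModel (cogwheel σ n (pathCQ σ m ρ FL TL) cT cF) c).satCQ (pathCQ σ m ρ FL TL) := by
  rintro ⟨h, hh⟩
  obtain ⟨K, Q, hw, hKQ⟩ := exists_walk_of_mem_cogwheel hm fun i hi =>
    hh (At.R (ρ i) i (i + 1)) (Or.inl ⟨i, hi, rfl⟩)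
  refine hw.false_of_T_nodes hc1 hc2 hTL hcT fun t ht => ?_
  have hTS := hh (At.T t) (Or.inr (Or.inr ⟨t, ht, rfl⟩))
  rw [At.map, Interp.satAt, hKQ t (hTL ht)] at hTS
  exact TS_wheelNorm_of_contacts_F hdisj hcT hcF hF hTS

theorem satCQ_of_contact_switch (hdisj : ∀ i, ¬ (i ∈ FL ∧ i ∈ TL)) (hcT : ∀ j, cT j ∈ TL)
    (hcF : ∀ j, cF j ∈ FL) {j : ZMod n} (hj : c (j, cF j) = false)
    (hj1 : c (j + 1, cF (j + 1)) = true) :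
    (minModel (cogwheel σ n (pathCQ σ m ρ FL TL) cT cF) c).satCQ (pathCQ σ m ρ FL TL) := by
  refine ⟨fun v => wheelNorm n cT cF (j + 1, v), ?_⟩
  rintro a (⟨i, hi, rfl⟩ | ⟨f, hf, rfl⟩ | ⟨t, ht, rfl⟩)
  · exact R_mem_cogwheel.mpr ⟨j + 1, i, hi, rfl, rfl, rfl⟩
  · show (minModel _ c).FS (wheelNorm n cT cF (j + 1, f))
    have hfT : f ≠ cT (j + 1) := fun h => hdisj f ⟨hf, h ▸ hcT (j + 1)⟩
    rw [wheelNorm_of_ne hfT, minModel_FS_iff hdisj hcT hcF]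
    by_cases hfc : f = cF (j + 1)
    · exact Or.inr ⟨hfc, hfc ▸ hj1⟩
    · exact Or.inl ⟨hf, hfc⟩
  · show (minModel _ c).TS (wheelNorm n cT cF (j + 1, t))
    by_cases htc : t = cT (j + 1)
    · rw [htc, wheelNorm_cT, add_sub_cancel_right, minModel_TS_contact_iff hdisj hcT hcF]
      exact hj
    · rw [wheelNorm_of_ne htc, minModel_TS_iff hdisj hcT hcF]
      exact Or.inl ⟨ht, htc⟩

end Cogwheel

theorem statement_16_general {σ : Type} (m n : ℕ) (ρ : ℕ → σ) (FL TL : Set ℕ)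
    (cT cF : ZMod n → ℕ)
    (hm : 0 < m) (hFL : FL ⊆ Set.Iic m) (hTL : TL ⊆ Set.Iic m)
    (hdisj : ∀ i, ¬ (i ∈ FL ∧ i ∈ TL))
    (hn : m ≤ n)
    (hcT : ∀ j, cT j ∈ TL) (hcF : ∀ j, cF j ∈ FL)
    (hcond1 : ∀ j, cT j < cF j)
    (hcond2 : ∀ j, cT (j + 1) < cF j) :
    ∀ c : ZMod n × ℕ → Bool,
      (¬ (minModel (cogwheel σ n (pathCQ σ m ρ FL TL) cT cF) c).satCQ (pathCQ σ m ρ FL TL) ↔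
        ((∀ j : ZMod n,
            (minModel (cogwheel σ n (pathCQ σ m ρ FL TL) cT cF) c).TS (j, cF j)) ∨
         (∀ j : ZMod n,
            (minModel (cogwheel σ n (pathCQ σ m ρ FL TL) cT cF) c).FS (j, cF j)))) := by
  intro c
  have : NeZero n := ⟨by omega⟩
  simp only [minModel_TS_contact_iff hdisj hcT hcF, minModel_FS_contact_iff hdisj hcT hcF]
  constructor
  · intro hns
    by_contra! hmixed
    obtain ⟨⟨j1, hj1⟩, ⟨j0, hj0⟩⟩ := hmixed
    obtain ⟨j, hj, hj'⟩ := ZMod.exists_not_and_add_one (P := fun j => c (j, cF j) = true)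
      ⟨j1, by simpa using hj1⟩ ⟨j0, hj0⟩
    exact hns (satCQ_of_contact_switch hdisj hcT hcF (by simpa using hj) hj')
  · rintro (hT | hF)
    · exact not_satCQ_of_contacts_T hm hFL hdisj hcT hcF hcond1 hcond2 hT
    · exact not_satCQ_of_contacts_F hm hTL hdisj hcT hcF hcond1 hcond2 hF

/-- Let `q` be a twinless path `2`-CQ whose first `T`-node
precedes its first `F`-node, and let `W` be an `n`-cogwheel for `q`, `n ≥ |q|`,
satisfying the cogwheel conditions (i) (`cT j ≺ cF j` inside each copy) and
(ii) (`cT (j+1) ≺ cF j` as nodes of `q`). Then for every minimal model `I` of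
`cov_A` and `W`:  `I ⊭ q` iff either all contacts of `W` are in `T^I` or all
contacts of `W` are in `F^I`. -/
theorem statement_16 {σ : Type} (m n : ℕ) (ρ : ℕ → σ) (FL TL : Set ℕ)
    (cT cF : ZMod n → ℕ)
    (hm : 0 < m) (hFL : FL ⊆ Set.Iic m) (hTL : TL ⊆ Set.Iic m)
    (hdisj : ∀ i, ¬ (i ∈ FL ∧ i ∈ TL))
    (hF2 : FL.Nontrivial) (hT2 : TL.Nontrivial)
    (ht1f1 : sInf TL < sInf FL)
    (hn : m ≤ n)
    (hcT : ∀ j, cT j ∈ TL) (hcF : ∀ j, cF j ∈ FL)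
    (hcond1 : ∀ j, cT j < cF j)
    (hcond2 : ∀ j, cT (j + 1) < cF j) :
    ∀ c : ZMod n × ℕ → Bool,
      (¬ (minModel (cogwheel σ n (pathCQ σ m ρ FL TL) cT cF) c).satCQ (pathCQ σ m ρ FL TL) ↔
        ((∀ j : ZMod n,
            (minModel (cogwheel σ n (pathCQ σ m ρ FL TL) cT cF) c).TS (j, cF j)) ∨
         (∀ j : ZMod n,
            (minModel (cogwheel σ n (pathCQ σ m ρ FL TL) cT cF) c).FS (j, cF j)))) :=
  statement_16_general m n ρ FL TL cT cF hm hFL hTL hdisj hn hcT hcF hcond1 hcond2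

end DS
end
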